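/- arXiv:2206.11638 — 12 statements merged into one kernel-verified Lean document; each statement's English description precedes it below -/
import Mathlib

section
/- Let C∞ := {z ∈ ℓ∞ : z n = 0 for some n ∈ ℕ} be the coordinate cross. The closure of C∞ in ℓ∞ is exactly the set {z ∈ ℓ∞ : ⨅_{n ∈ ℕ} |z n| = 0}. -/
open scoped ENNReal

/-!
A point `w` of the cross vanishes at some `i`, so `‖z i‖ = ‖(z - w) i‖ ≤ dist z w`: points near
the cross have small coordinates. Conversely, erasing the coordinate `i` of `z` lands in the
cross at distance `‖z i‖`.
-/

theorem Real.ciInf_eq_zero_iff_forall_exists_lt {ι : Type*} [Nonempty ι] {f : ι → ℝ}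
    (hf : ∀ i, 0 ≤ f i) : ⨅ i, f i = 0 ↔ ∀ ε > 0, ∃ i, f i < ε := by
  have hbdd : BddBelow (Set.range f) := ⟨0, Set.forall_mem_range.mpr hf⟩
  refine ⟨fun h ε hε => exists_lt_of_ciInf_lt (h ▸ hε), fun h => ?_⟩
  by_contra hne
  have hpos : 0 < ⨅ i, f i := (le_ciInf hf).lt_of_ne' hne
  obtain ⟨i, hi⟩ := h _ hpos
  exact (ciInf_le hbdd i).not_gt hi

namespace lp

variable {α : Type*} {E : α → Type*} [∀ i, NormedAddCommGroup (E i)] {p : ℝ≥0∞}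
  [Fact (1 ≤ p)]

theorem norm_apply_le_dist_of_apply_eq_zero {z w : lp E p} {i : α}
    (hw : w i = 0) : ‖z i‖ ≤ dist z w := by
  simpa [dist_eq_norm, hw] using norm_apply_le_norm (zero_lt_one.trans_le Fact.out).ne' (z - w) i

theorem dist_sub_single_apply_self [DecidableEq α] (z : lp E p) (i : α) :
    dist z (z - lp.single p i (z i)) = ‖z i‖ := by
  rw [dist_eq_norm, sub_sub_cancel, lp.norm_single (zero_lt_one.trans_le Fact.out)]

theorem mem_closure_setOf_exists_apply_eq_zero_iff {z : lp E p} :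
    z ∈ closure {w : lp E p | ∃ i, w i = 0} ↔ ∀ ε > 0, ∃ i, ‖z i‖ < ε := by
  classical
  rw [Metric.mem_closure_iff]
  refine forall₂_congr fun ε _ => ⟨?_, ?_⟩
  · rintro ⟨w, ⟨i, hw⟩, hdist⟩
    exact ⟨i, (norm_apply_le_dist_of_apply_eq_zero hw).trans_lt hdist⟩
  · rintro ⟨i, hi⟩
    refine ⟨z - lp.single p i (z i), ⟨i, ?_⟩, ?_⟩
    · simp
    · rwa [dist_sub_single_apply_self]

end lp

/-- The closure in `ℓ∞` of the coordinate cross `C∞ = {z | ∃ n, z n = 0}` is exactly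
the set of bounded sequences whose moduli have infimum `0`. -/
theorem closure_coordinate_cross :
    closure {z : lp (fun _ : ℕ => ℂ) ∞ | ∃ n : ℕ, z n = 0} =
      {z : lp (fun _ : ℕ => ℂ) ∞ | (⨅ n : ℕ, ‖z n‖) = 0} := by
  ext z
  rw [lp.mem_closure_setOf_exists_apply_eq_zero_iff, Set.mem_ofPred_eq,
    Real.ciInf_eq_zero_iff_forall_exists_lt fun n => norm_nonneg _]
end

section
/- The open set {z ∈ ℓ∞ : 0 < ⨅_{n ∈ ℕ} |z n|} (the complement in ℓ∞ of the closure of the coordinate cross C∞ := {z : z n = 0 for some n}) is path-connected. -/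
open scoped ENNReal

/-!
The set is exactly the group of units of the commutative Banach algebra `ℓ∞`, and every such
unit is an exponential: a coordinatewise principal logarithm of `z` stays bounded because
`|z n|` is bounded above and away from `0`. Hence `t ↦ exp (t • log z)` joins `1` to `z`
through units.
-/

open NormedSpace

theorem joinedIn_setOf_isUnit_one_exp {𝔸 : Type*} [NormedRing 𝔸] [NormedAlgebra ℚ 𝔸]
    [NormedSpace ℝ 𝔸] [CompleteSpace 𝔸] (w : 𝔸) : JoinedIn {x : 𝔸 | IsUnit x} 1 (exp w) :=
  JoinedIn.ofLine (f := fun t : ℝ => exp (t • w)) (by fun_prop) (by simp [exp_zero]) (by simp)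
    (Set.image_subset_iff.2 fun t _ => isUnit_exp (t • w))

theorem Real.abs_log_le_add_inv (a : ℝ) (ha : 0 ≤ a) : |Real.log a| ≤ a + a⁻¹ := by
  rcases ha.eq_or_lt with rfl | ha
  · simp
  rw [abs_le]
  constructor
  · have := Real.log_le_sub_one_of_pos (inv_pos.2 ha)
    rw [Real.log_inv] at this
    linarith
  · linarith [Real.log_le_sub_one_of_pos ha, inv_pos.2 ha]

theorem Complex.norm_log_le (x : ℂ) : ‖Complex.log x‖ ≤ ‖x‖ + ‖x‖⁻¹ + Real.pi := by
  calc ‖Complex.log x‖ ≤ |(Complex.log x).re| + |(Complex.log x).im| :=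
        Complex.norm_le_abs_re_add_abs_im _
    _ ≤ ‖x‖ + ‖x‖⁻¹ + Real.pi := by
        rw [Complex.log_re, Complex.log_im]
        linarith [Real.abs_log_le_add_inv ‖x‖ (norm_nonneg x), Complex.abs_arg_le_pi x]

namespace lp

variable {ι : Type*} {B : ι → Type*} [∀ i, NormedRing (B i)] [∀ i, NormOneClass (B i)]

def inftyEvalRingHom (i : ι) : lp B ∞ →+* B i where
  toFun f := f i
  map_one' := by rw [infty_coeFn_one]; rfl
  map_mul' f g := by rw [infty_coeFn_mul]; rfl
  map_zero' := rfl
  map_add' _ _ := rfl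

theorem continuous_inftyEvalRingHom (i : ι) : Continuous (inftyEvalRingHom (B := B) i) :=
  (continuous_apply i).comp uniformContinuous_coe.continuous

theorem infty_coeFn_exp [∀ i, NormedAlgebra ℚ (B i)] [∀ i, CompleteSpace (B i)] (w : lp B ∞)
    (i : ι) : exp w i = exp (w i) :=
  map_exp (inftyEvalRingHom i) (continuous_inftyEvalRingHom i) w

theorem iInf_norm_pos_of_isUnit [Nonempty ι] {z : lp B ∞} (hz : IsUnit z) :
    0 < ⨅ i, ‖z i‖ := by
  obtain ⟨y, hzy⟩ := hz.exists_right_inv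
  have hle : ∀ i, 1 ≤ ‖z i‖ * ‖y‖ := fun i =>
    calc (1 : ℝ) = ‖(z * y) i‖ := by rw [hzy, infty_coeFn_one, Pi.one_apply, norm_one]
      _ ≤ ‖z i‖ * ‖y i‖ := by rw [infty_coeFn_mul]; exact norm_mul_le _ _
      _ ≤ ‖z i‖ * ‖y‖ := by gcongr; exact norm_apply_le_norm ENNReal.top_ne_zero y i
  have hy : 0 < ‖y‖ := by
    obtain ⟨i⟩ := ‹Nonempty ι›
    exact pos_of_mul_pos_right (one_pos.trans_le (hle i)) (norm_nonneg _)
  exact (inv_pos.2 hy).trans_le (le_ciInf fun i => (inv_le_iff_one_le_mul₀ hy).2 (hle i))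

theorem exists_exp_eq_of_iInf_norm_pos {z : lp (fun _ : ι => ℂ) ∞} (hz : 0 < ⨅ i, ‖z i‖) :
    ∃ w : lp (fun _ : ι => ℂ) ∞, exp w = z := by
  set ε := ⨅ i, ‖z i‖
  have hε : ∀ i, ε ≤ ‖z i‖ := ciInf_le ⟨0, by rintro _ ⟨i, rfl⟩; exact norm_nonneg _⟩
  have hlog : Memℓp (fun i => Complex.log (z i)) ∞ := by
    refine memℓp_infty ⟨‖z‖ + ε⁻¹ + Real.pi, ?_⟩
    rintro _ ⟨i, rfl⟩
    have : ‖z i‖⁻¹ ≤ ε⁻¹ := inv_anti₀ hz (hε i)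
    linarith [Complex.norm_log_le (z i), norm_apply_le_norm ENNReal.top_ne_zero z i]
  refine ⟨⟨_, hlog⟩, ext (funext fun i => ?_)⟩
  rw [infty_coeFn_exp, ← Complex.exp_eq_exp_ℂ]
  exact Complex.exp_log (norm_pos_iff.1 (hz.trans_le (hε i)))

end lp

/-- The complement in `ℓ∞` of the closure of the coordinate cross, i.e. the set
`{z | 0 < ⨅ n, |z n|}`, is path-connected. -/
theorem isPathConnected_compl_closure_coordinate_cross :
    IsPathConnected {z : lp (fun _ : ℕ => ℂ) ∞ | 0 < ⨅ n : ℕ, ‖z n‖} := by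
  have hunits : {z : lp (fun _ : ℕ => ℂ) ∞ | IsUnit z} ⊆ {z | 0 < ⨅ n : ℕ, ‖z n‖} :=
    fun _ => lp.iInf_norm_pos_of_isUnit
  refine ⟨1, hunits isUnit_one, fun z hz => ?_⟩
  obtain ⟨w, rfl⟩ := lp.exists_exp_eq_of_iInf_norm_pos hz
  exact (joinedIn_setOf_isUnit_one_exp w).mono hunits
end

section
/- Every continuous path in ℓ∞ avoiding the closure of the coordinate cross has bounded argument: if γ : ℝ → ℓ∞ is continuous on [0,1] and 0 < ⨅_{n ∈ ℕ} |γ(t) n| for every t ∈ [0,1], then there exist functions A : ℕ → ℝ → ℝ and a constant Π ∈ ℝ such that each A n is continuous on [0,1], γ(t) n = |γ(t) n| · exp(i · A n t) for all n ∈ ℕ and t ∈ [0,1], and |A n t| ≤ Π for all n ∈ ℕ and t ∈ [0,1]. -/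
/-!
The infimum of the coordinate moduli is a 1-Lipschitz function on `ℓ∞`, so along the compact
path it stays above some `m > 0`. By uniform continuity there is a grid of mesh `1 / M` on
`[0, 1]` along which every coordinate moves by less than `m`, hence by less than its own
modulus. The quotient of consecutive values of a coordinate therefore lies in the disc
`‖w - 1‖ < 1` inside the slit plane, where `arg` is continuous. Summing these `M` principal
arguments, plus the argument of the starting value, gives a continuous argument bounded by
`(M + 1) π`, uniformly in the coordinate.
-/

open scoped ENNReal
open scoped Real
open Complex Set Finset

theorem Complex.exp_arg_mul_I {z : ℂ} (hz : z ≠ 0) : exp (arg z * I) = z / ‖z‖ := by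
  rw [eq_div_iff (ofReal_ne_zero.mpr (norm_ne_zero_iff.mpr hz)), mul_comm]
  exact norm_mul_exp_arg_mul_I z

theorem norm_mul_exp_arg_add_sum_arg_div_mul_I {f : ℕ → ℂ} (hf : ∀ i, f i ≠ 0) (n : ℕ) :
    ‖f n‖ * exp ((arg (f 0) + ∑ i ∈ range n, arg (f (i + 1) / f i) : ℝ) * I) = f n := by
  induction n with
  | zero => simp [norm_mul_exp_arg_mul_I]
  | succ n ih =>
    have hexp : exp ((arg (f 0) + ∑ i ∈ range n, arg (f (i + 1) / f i) : ℝ) * I) = f n / ‖f n‖ := by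
      rw [eq_div_iff (ofReal_ne_zero.mpr (norm_ne_zero_iff.mpr (hf n))), mul_comm, ih]
    rw [sum_range_succ, ← add_assoc, ofReal_add, add_mul, exp_add, hexp,
      Complex.exp_arg_mul_I (div_ne_zero (hf (n + 1)) (hf n)), norm_div, ofReal_div]
    field_simp [hf n, norm_ne_zero_iff.mpr (hf (n + 1))]

theorem div_mem_slitPlane_of_norm_sub_lt {w z : ℂ} (h : ‖w - z‖ < ‖z‖) : w / z ∈ slitPlane := by
  have hz : z ≠ 0 := norm_pos_iff.mp ((norm_nonneg _).trans_lt h)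
  have hsmall : ‖(w - z) / z‖ < 1 := by
    rwa [norm_div, div_lt_one (norm_pos_iff.mpr hz)]
  convert mem_slitPlane_of_norm_lt_one hsmall using 1
  field_simp
  ring

theorem abs_min_succ_div_sub_min_div_le (t : ℝ) (M i : ℕ) :
    |min t ((i + 1 : ℕ) / M) - min t (i / M)| ≤ (M : ℝ)⁻¹ := by
  refine (abs_min_sub_min_le_max _ _ _ _).trans ?_
  rw [sub_self, abs_zero, Nat.cast_succ, ← sub_div, add_sub_cancel_left, abs_of_nonneg (by positivity)]
  exact max_le (by positivity) (one_div _).le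

theorem exists_continuousOn_arg_of_norm_sub_lt {z : ℝ → ℂ} (hz : ContinuousOn z (Icc 0 1))
    {M : ℕ} (hM : 0 < M)
    (hstep : ∀ s ∈ Icc (0 : ℝ) 1, ∀ t ∈ Icc (0 : ℝ) 1, |s - t| ≤ (M : ℝ)⁻¹ → ‖z s - z t‖ < ‖z t‖) :
    ∃ θ : ℝ → ℝ, ContinuousOn θ (Icc 0 1) ∧
      (∀ t ∈ Icc (0 : ℝ) 1, z t = ‖z t‖ * exp (I * θ t)) ∧
      ∀ t ∈ Icc (0 : ℝ) 1, |θ t| ≤ (M + 1) * π := by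
  set q : ℕ → ℝ → ℝ := fun i t => min t (i / M)
  have hq_mem : ∀ i, ∀ t ∈ Icc (0 : ℝ) 1, q i t ∈ Icc (0 : ℝ) 1 := fun i t ht =>
    ⟨le_min ht.1 (by positivity), (min_le_left _ _).trans ht.2⟩
  have hz_ne : ∀ t ∈ Icc (0 : ℝ) 1, z t ≠ 0 := fun t ht =>
    norm_pos_iff.mp ((norm_nonneg _).trans_lt (hstep t ht t ht (by simp)))
  have hslit : ∀ i, ∀ t ∈ Icc (0 : ℝ) 1, z (q (i + 1) t) / z (q i t) ∈ slitPlane := fun i t ht =>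
    div_mem_slitPlane_of_norm_sub_lt <| hstep _ (hq_mem _ t ht) _ (hq_mem _ t ht)
      (abs_min_succ_div_sub_min_div_le t M i)
  refine ⟨fun t => arg (z 0) + ∑ i ∈ range M, arg (z (q (i + 1) t) / z (q i t)), ?_, ?_, ?_⟩
  · have hzq : ∀ i, ContinuousOn (fun t => z (q i t)) (Icc 0 1) := fun i =>
      hz.comp (continuous_id.min continuous_const).continuousOn (hq_mem i)
    refine continuousOn_const.add (continuousOn_finsetSum _ fun i _ t ht => ?_)
    exact (continuousAt_arg (hslit i t ht)).comp_continuousWithinAt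
      (f := fun s => z (q (i + 1) s) / z (q i s))
      (((hzq (i + 1)).div (hzq i) fun s hs => hz_ne _ (hq_mem i s hs)) t ht)
  · intro t ht
    have hq0 : q 0 t = 0 := by simp [q, ht.1]
    have hqM : q M t = t := by simp [q, hM.ne', ht.2]
    have hlift := norm_mul_exp_arg_add_sum_arg_div_mul_I (f := fun i => z (q i t))
      (fun i => hz_ne _ (hq_mem i t ht)) M
    simp only [hq0, hqM] at hlift
    rw [mul_comm I]
    exact hlift.symm
  · intro t _
    calc |arg (z 0) + ∑ i ∈ range M, arg (z (q (i + 1) t) / z (q i t))|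
        ≤ |arg (z 0)| + ∑ i ∈ range M, |arg (z (q (i + 1) t) / z (q i t))| :=
          (abs_add_le _ _).trans (add_le_add_right (abs_sum_le_sum_abs _ _) _)
      _ ≤ π + ∑ _i ∈ range M, π :=
          add_le_add (abs_arg_le_pi _) (sum_le_sum fun i _ => abs_arg_le_pi _)
      _ = (M + 1) * π := by rw [sum_const, card_range, nsmul_eq_mul]; ring

theorem bddBelow_range_norm_apply {ι : Type*} {E : ι → Type*} [∀ i, SeminormedAddGroup (E i)]
    (f : ∀ i, E i) :
    BddBelow (range fun i => ‖f i‖) :=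
  ⟨0, by rintro _ ⟨i, rfl⟩; positivity⟩

theorem lipschitzWith_one_iInf_norm_apply {ι : Type*} [Nonempty ι] {E : ι → Type*}
    [∀ i, NormedAddCommGroup (E i)] :
    LipschitzWith 1 (fun x : lp E ∞ => ⨅ i, ‖x i‖) := by
  refine LipschitzWith.of_le_add fun x y => ?_
  suffices ∀ i, (⨅ i, ‖x i‖) - dist x y ≤ ‖y i‖ by linarith [le_ciInf this]
  intro i
  have hcoord : dist (x i) (y i) ≤ dist x y := by
    simpa using (lp.lipschitzWith_one_eval ∞ i).dist_le_mul x y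
  linarith [ciInf_le (bddBelow_range_norm_apply x) i, norm_le_norm_add_norm_sub' (x i) (y i),
    dist_eq_norm (x i) (y i)]

theorem IsCompact.exists_pos_forall_le_norm_apply {X ι : Type*} [TopologicalSpace X] [Nonempty ι]
    {E : ι → Type*} [∀ i, NormedAddCommGroup (E i)] {K : Set X} (hK : IsCompact K)
    {γ : X → lp E ∞} (hγ : ContinuousOn γ K) (hpos : ∀ t ∈ K, 0 < ⨅ i, ‖γ t i‖) :
    ∃ m > 0, ∀ t ∈ K, ∀ i, m ≤ ‖γ t i‖ := by
  obtain ⟨m, hm, hle⟩ :=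
    hK.exists_forall_le' (lipschitzWith_one_iInf_norm_apply.continuous.comp_continuousOn hγ) hpos
  exact ⟨m, hm, fun t ht i => (hle t ht).trans (ciInf_le (bddBelow_range_norm_apply _) i)⟩

/-- Every continuous path in `ℓ∞` avoiding the closure of the coordinate cross has
bounded argument: there is a continuous choice of arguments of all coordinates,
uniformly bounded by a single constant `Pi₀`. -/
theorem path_off_cross_has_bounded_argument
    (γ : ℝ → lp (fun _ : ℕ => ℂ) ∞)
    (hγ : ContinuousOn γ (Set.Icc 0 1))
    (hcross : ∀ t ∈ Set.Icc (0:ℝ) 1, 0 < ⨅ n : ℕ, ‖γ t n‖) :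
    ∃ (A : ℕ → ℝ → ℝ) (Pi₀ : ℝ),
      (∀ n : ℕ, ContinuousOn (A n) (Set.Icc 0 1)) ∧
      (∀ n : ℕ, ∀ t ∈ Set.Icc (0:ℝ) 1,
        γ t n = (‖γ t n‖ : ℂ) * Complex.exp (Complex.I * (A n t))) ∧
      (∀ n : ℕ, ∀ t ∈ Set.Icc (0:ℝ) 1, |A n t| ≤ Pi₀) := by
  obtain ⟨m, hm, hle⟩ := isCompact_Icc.exists_pos_forall_le_norm_apply hγ hcross
  obtain ⟨δ, hδ, hclose⟩ :=
    Metric.uniformContinuousOn_iff.mp (isCompact_Icc.uniformContinuousOn_of_continuous hγ) m hm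
  obtain ⟨M, hM⟩ := exists_nat_one_div_lt hδ
  have hstep : ∀ n, ∀ s ∈ Icc (0 : ℝ) 1, ∀ t ∈ Icc (0 : ℝ) 1,
      |s - t| ≤ ((M + 1 : ℕ) : ℝ)⁻¹ → ‖γ s n - γ t n‖ < ‖γ t n‖ := by
    intro n s hs t ht hst
    calc ‖γ s n - γ t n‖ ≤ dist (γ s) (γ t) := by
          simpa [dist_eq_norm] using (lp.lipschitzWith_one_eval ∞ n).dist_le_mul (γ s) (γ t)
      _ < m := hclose s hs t ht (by rw [Real.dist_eq]; push_cast [← one_div] at hst; linarith)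
      _ ≤ ‖γ t n‖ := hle t ht n
  choose A hAcont hAeq hAbd using fun n => exists_continuousOn_arg_of_norm_sub_lt
    ((lp.lipschitzWith_one_eval ∞ n).continuous.comp_continuousOn hγ) M.succ_pos (hstep n)
  exact ⟨A, (M.succ + 1) * π, hAcont, hAeq, hAbd⟩
end

section
/- Let r, ρ : ℕ → ℝ be sequences of positive reals with ρ n / r n → 0 as n → ∞. Let z0 : ℕ → ℂ satisfy 0 < ⨅_{n} (|z0 n| / r n), and let z : ℕ → ℂ satisfy |z n| ≤ β · ρ n for all n, for some constant β. Then ⨅_{n} (|z0 n + z n| / r n) = 0 if and only if z0 n + z n = 0 for some n ∈ ℕ. -/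
/-! The cross is closed along the slice because the perturbation `z` is negligible at the scale
of `r`: since `‖z n‖ / r n ≤ β ρ n / r n → 0`, the weighted moduli `‖z0 n + z n‖ / r n` are
eventually at least half of `m := ⨅ n, ‖z0 n‖ / r n > 0`. An infimum of `0` can then only be
attained among the finitely many remaining indices, i.e. by a vanishing coordinate. -/

open Filter Topology

theorem Real.iInf_pos_of_pos_of_eventually_ge {ι : Type*} [Nonempty ι] {f : ι → ℝ} {c : ℝ}
    (hf : ∀ i, 0 < f i) (hc : 0 < c) (hfc : ∀ᶠ i in cofinite, c ≤ f i) : 0 < ⨅ i, f i := by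
  set s := insert c ((hfc.image f).toFinset)
  have hs : s.Nonempty := Finset.insert_nonempty _ _
  have hpos : 0 < s.min' hs := by
    rw [Finset.lt_min'_iff]
    intro x hx
    rcases Finset.mem_insert.1 hx with rfl | hx
    · exact hc
    · obtain ⟨i, -, rfl⟩ := (Set.Finite.mem_toFinset _).1 hx
      exact hf i
  refine hpos.trans_le (le_ciInf fun i => ?_)
  by_cases hi : c ≤ f i
  · exact (s.min'_le c (Finset.mem_insert_self c _)).trans hi
  · exact s.min'_le _ (Finset.mem_insert_of_mem ((Set.Finite.mem_toFinset _).2 ⟨i, hi, rfl⟩))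

theorem tendsto_norm_div_of_norm_le_mul {E : Type*} [SeminormedAddCommGroup E] {ι : Type*}
    {l : Filter ι} {r ρ : ι → ℝ} (hr : ∀ n, 0 < r n) (hlim : Tendsto (fun n => ρ n / r n) l (𝓝 0))
    {z : ι → E} {β : ℝ} (hz : ∀ n, ‖z n‖ ≤ β * ρ n) :
    Tendsto (fun n => ‖z n‖ / r n) l (𝓝 0) := by
  refine squeeze_zero (fun n => div_nonneg (norm_nonneg _) (hr n).le) (fun n => ?_)
    (by simpa using hlim.const_mul β)
  rw [mul_div_assoc']
  exact div_le_div_of_nonneg_right (hz n) (hr n).le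

theorem eventually_le_norm_add_div {E : Type*} [SeminormedAddCommGroup E] {ι : Type*}
    {l : Filter ι} {r : ι → ℝ} (hr : ∀ i, 0 < r i) {z0 z : ι → E} {m c : ℝ} (hcm : c < m)
    (hz0 : ∀ i, m ≤ ‖z0 i‖ / r i) (hz : Tendsto (fun i => ‖z i‖ / r i) l (𝓝 0)) :
    ∀ᶠ i in l, c ≤ ‖z0 i + z i‖ / r i := by
  filter_upwards [hz.eventually_lt_const (sub_pos.2 hcm)] with i hi
  calc c ≤ m - ‖z i‖ / r i := by linarith
    _ ≤ (‖z0 i‖ - ‖z i‖) / r i := by rw [sub_div]; linarith [hz0 i]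
    _ ≤ ‖z0 i + z i‖ / r i := by gcongr; exacts [(hr i).le, norm_sub_le_norm_add ..]

theorem affine_slice_closure_cross_eq_cross_general
    (r ρ : ℕ → ℝ) (hr : ∀ n, 0 < r n)
    (hlim : Filter.Tendsto (fun n => ρ n / r n) Filter.atTop (nhds 0))
    (z0 : ℕ → ℂ) (hz0 : 0 < ⨅ n : ℕ, ‖z0 n‖ / r n)
    (z : ℕ → ℂ) (β : ℝ) (hz : ∀ n, ‖z n‖ ≤ β * ρ n) :
    (⨅ n : ℕ, ‖z0 n + z n‖ / r n) = 0 ↔ ∃ n : ℕ, z0 n + z n = 0 := by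
  have hnonneg : ∀ n, 0 ≤ ‖z0 n + z n‖ / r n := fun n => div_nonneg (norm_nonneg _) (hr n).le
  constructor
  · intro h0
    by_contra! hne
    have hpos : ∀ n, 0 < ‖z0 n + z n‖ / r n := fun n => div_pos (norm_pos_iff.2 (hne n)) (hr n)
    have hfar : ∀ᶠ n in cofinite, (⨅ n, ‖z0 n‖ / r n) / 2 ≤ ‖z0 n + z n‖ / r n := by
      rw [Nat.cofinite_eq_atTop]
      exact eventually_le_norm_add_div hr (half_lt_self hz0)
        (ciInf_le ⟨0, Set.forall_mem_range.2 fun k => div_nonneg (norm_nonneg _) (hr k).le⟩)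
        (tendsto_norm_div_of_norm_le_mul hr hlim hz)
    exact (Real.iInf_pos_of_pos_of_eventually_ge hpos (half_pos hz0) hfar).ne' h0
  · rintro ⟨n, hn⟩
    refine le_antisymm ?_ (Real.iInf_nonneg hnonneg)
    exact (ciInf_le ⟨0, Set.forall_mem_range.2 hnonneg⟩ n).trans_eq (by simp [hn])

/-- If `ρ n / r n → 0`, `z0` avoids the closure of the coordinate cross in `l_r`,
and `z ∈ l_ρ` (i.e. `|z n| ≤ β ρ n`), then `z0 + z` lies in the closure of the
coordinate cross in `l_r` iff it lies on the coordinate cross itself. -/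
theorem affine_slice_closure_cross_eq_cross
    (r ρ : ℕ → ℝ) (hr : ∀ n, 0 < r n) (hρ : ∀ n, 0 < ρ n)
    (hlim : Filter.Tendsto (fun n => ρ n / r n) Filter.atTop (nhds 0))
    (z0 : ℕ → ℂ) (hz0 : 0 < ⨅ n : ℕ, ‖z0 n‖ / r n)
    (z : ℕ → ℂ) (β : ℝ) (hz : ∀ n, ‖z n‖ ≤ β * ρ n) :
    (⨅ n : ℕ, ‖z0 n + z n‖ / r n) = 0 ↔ ∃ n : ℕ, z0 n + z n = 0 :=
  affine_slice_closure_cross_eq_cross_general r ρ hr hlim z0 hz0 z β hz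
end

section
/- Define f : ℓ∞ × ℓ∞ × ℂ → ℂ by f(b, u, s) = Σ'_{n ∈ ℕ} b n · ((u n)/(n+1))^s, where z^s denotes the principal-branch complex power (well defined since ‖u − 1‖ < 1 forces Re(u n) > 0 for all n). Then the series converges absolutely and f is analytic (AnalyticOnNhd over ℂ) on the open set {(b, u, s) : ‖u − 1‖ < 1 and Re s > 1}. (Under z n := (u n)/(n+1), this is the Euler–Riemann zeta function ζ(b, z, s) = Σ b n · (z n)^s on ℓ∞ × B∞_{n⁻¹}(n⁻¹, 1) × H₁.) -/
/-!
Since `(u n / (n + 1)) ^ s = (u n) ^ s * (n + 1) ^ (-s)`, the series is the `ℓ∞`–`ℓ¹` pairing of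
`b * u ^ s` with the `ℓ¹`-valued kernel `((n + 1) ^ (-s))ₙ`. For `‖u - 1‖ < 1` the componentwise
power `u ^ s` is `exp (s • log u)` computed in the Banach algebra `ℓ∞`, with `log u` the power
series of `log (1 + x)` at `x = u - 1`; hence `(u, s) ↦ u ^ s` is analytic as a composition of
analytic maps. The kernel is holomorphic on `Re s > 1`, being a series of holomorphic `ℓ¹`-valued
functions dominated by `∑ (n + 1) ^ (-σ)`, and the pairing is continuous bilinear.
-/

open scoped ENNReal

noncomputable section

section LogOneAdd

variable {A : Type*} [NormedRing A] [NormedAlgebra ℂ A]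

variable (A) in
def logSeries : FormalMultilinearSeries ℂ A A :=
  .ofScalars A fun n => (-1) ^ (n + 1) / n

theorem one_le_radius_logSeries : 1 ≤ (logSeries A).radius := by
  refine ENNReal.coe_one ▸ (logSeries A).le_radius_of_bound 1 fun n => ?_
  rcases n.eq_zero_or_pos with rfl | hn
  · simp [logSeries]
  · calc ‖logSeries A n‖ * 1 ^ n ≤ ‖((-1 : ℂ) ^ (n + 1) / n)‖ := by
          rw [one_pow, mul_one]
          exact FormalMultilinearSeries.ofScalars_norm_le A _ n hn
      _ ≤ 1 := by
          rw [norm_div, norm_pow, norm_neg, norm_one, one_pow, Complex.norm_natCast]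
          exact div_le_one_of_le₀ (mod_cast hn) n.cast_nonneg

theorem mem_eball_radius_logSeries {x : A} (hx : ‖x‖ < 1) :
    x ∈ Metric.eball (0 : A) (logSeries A).radius :=
  mem_eball_zero_iff.2 <|
    (show ‖x‖ₑ < 1 by rwa [← ofReal_norm, ENNReal.ofReal_lt_one]).trans_le one_le_radius_logSeries

def logOneAdd (x : A) : A := (logSeries A).sum x

variable [CompleteSpace A]

theorem hasFPowerSeriesOnBall_logOneAdd :
    HasFPowerSeriesOnBall logOneAdd (logSeries A) 0 (logSeries A).radius :=
  (logSeries A).hasFPowerSeriesOnBall (zero_lt_one.trans_le one_le_radius_logSeries)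

theorem hasSum_logOneAdd {x : A} (hx : ‖x‖ < 1) :
    HasSum (fun n : ℕ => ((-1 : ℂ) ^ (n + 1) / n) • x ^ n) (logOneAdd x) := by
  simpa [logSeries, FormalMultilinearSeries.ofScalars_apply_eq] using
    hasFPowerSeriesOnBall_logOneAdd.hasSum (mem_eball_radius_logSeries hx)

theorem analyticAt_logOneAdd {x : A} (hx : ‖x‖ < 1) : AnalyticAt ℂ logOneAdd x :=
  hasFPowerSeriesOnBall_logOneAdd.analyticOnNhd x (mem_eball_radius_logSeries hx)

end LogOneAdd

namespace lp

section Pairing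

variable {α 𝕜 : Type*} [NontriviallyNormedField 𝕜]

theorem summable_norm_mul_infty_one (b : lp (fun _ : α => 𝕜) ∞) (a : lp (fun _ : α => 𝕜) 1) :
    Summable fun i => ‖b i * a i‖ := by
  have ha : Summable fun i => ‖a i‖ := by simpa using (lp.memℓp a).summable (by simp)
  refine (ha.mul_left ‖b‖).of_nonneg_of_le (fun _ => norm_nonneg _) fun i => ?_
  rw [norm_mul]
  gcongr
  exact norm_apply_le_norm ENNReal.top_ne_zero b i

theorem norm_tsum_mul_le_infty_one (b : lp (fun _ : α => 𝕜) ∞) (a : lp (fun _ : α => 𝕜) 1) :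
    ‖∑' i, b i * a i‖ ≤ ‖b‖ * ‖a‖ := by
  have ha : HasSum (fun i => ‖a i‖) ‖a‖ := by simpa using lp.hasSum_norm (p := 1) (by simp) a
  calc ‖∑' i, b i * a i‖ ≤ ∑' i, ‖b i * a i‖ :=
        norm_tsum_le_tsum_norm (summable_norm_mul_infty_one b a)
    _ ≤ ∑' i, ‖b‖ * ‖a i‖ := by
        refine (summable_norm_mul_infty_one b a).tsum_le_tsum (fun i => ?_)
          (ha.summable.mul_left _)
        rw [norm_mul]
        gcongr
        exact norm_apply_le_norm ENNReal.top_ne_zero b i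
    _ = ‖b‖ * ‖a‖ := by rw [tsum_mul_left, ha.tsum_eq]

variable (𝕜) in
def pairingInftyOne [CompleteSpace 𝕜] :
    lp (fun _ : α => 𝕜) ∞ →L[𝕜] lp (fun _ : α => 𝕜) 1 →L[𝕜] 𝕜 :=
  LinearMap.mkContinuous₂
    (LinearMap.mk₂ 𝕜 (fun b a => ∑' i, b i * a i)
      (fun b b' a => by
        simp only [coeFn_add, Pi.add_apply, add_mul]
        exact (summable_norm_mul_infty_one b a).of_norm.tsum_add
          (summable_norm_mul_infty_one b' a).of_norm)
      (fun c b a => by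
        simp only [coeFn_smul, Pi.smul_apply, smul_eq_mul, mul_assoc, tsum_mul_left])
      (fun b a a' => by
        simp only [coeFn_add, Pi.add_apply, mul_add]
        exact (summable_norm_mul_infty_one b a).of_norm.tsum_add
          (summable_norm_mul_infty_one b a').of_norm)
      (fun c b a => by
        simp only [coeFn_smul, Pi.smul_apply, smul_eq_mul, mul_left_comm _ c, tsum_mul_left]))
    1 fun b a => by rw [one_mul]; exact norm_tsum_mul_le_infty_one b a

theorem pairingInftyOne_apply [CompleteSpace 𝕜] (b : lp (fun _ : α => 𝕜) ∞)
    (a : lp (fun _ : α => 𝕜) 1) : pairingInftyOne 𝕜 b a = ∑' i, b i * a i :=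
  rfl

end Pairing

section Eval

variable {α : Type*} {B : α → Type*} [∀ i, NormedRing (B i)] [∀ i, NormOneClass (B i)]

def evalRingHom (i : α) : lp B ∞ →+* B i where
  toFun f := f i
  map_one' := congrFun infty_coeFn_one i
  map_mul' f g := congrFun (infty_coeFn_mul f g) i
  map_zero' := rfl
  map_add' _ _ := rfl

theorem continuous_evalRingHom (i : α) : Continuous (evalRingHom (B := B) i) :=
  (lipschitzWith_one_eval ∞ i).continuous

theorem exp_apply [∀ i, NormedAlgebra ℚ (B i)] [∀ i, CompleteSpace (B i)] (f : lp B ∞) (i : α) :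
    NormedSpace.exp f i = NormedSpace.exp (f i) :=
  NormedSpace.map_exp (evalRingHom i) (continuous_evalRingHom i) f

end Eval

section Cpow

variable {α : Type*} {u : lp (fun _ : α => ℂ) ∞}

theorem logOneAdd_apply {x : lp (fun _ : α => ℂ) ∞} (hx : ‖x‖ < 1) (i : α) :
    logOneAdd x i = Complex.log (1 + x i) := by
  have hxi : ‖x i‖ < 1 := (norm_apply_le_norm ENNReal.top_ne_zero x i).trans_lt hx
  have hterm (n : ℕ) :
      evalCLM ℂ _ ∞ i (((-1 : ℂ) ^ (n + 1) / n) • x ^ n) = (-1) ^ (n + 1) * x i ^ n / n := by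
    change ((_ : ℂ) • x ^ n) i = _
    rw [coeFn_smul, Pi.smul_apply, infty_coeFn_pow, Pi.pow_apply, smul_eq_mul, div_mul_eq_mul_div]
  have h := (hasSum_logOneAdd hx).mapL (evalCLM ℂ _ ∞ i)
  rw [funext hterm] at h
  exact h.unique (Complex.hasSum_taylorSeries_log hxi)

theorem apply_ne_zero_of_norm_sub_one_lt (hu : ‖u - 1‖ < 1) (i : α) : u i ≠ 0 := by
  intro h
  have := (norm_apply_le_norm ENNReal.top_ne_zero _ i).trans_lt hu
  rw [coeFn_sub, infty_coeFn_one, Pi.sub_apply, Pi.one_apply, h, zero_sub] at this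
  simp at this

def cpow (u : lp (fun _ : α => ℂ) ∞) (s : ℂ) : lp (fun _ : α => ℂ) ∞ :=
  NormedSpace.exp (s • logOneAdd (u - 1))

theorem cpow_apply (hu : ‖u - 1‖ < 1) (s : ℂ) (i : α) : cpow u s i = u i ^ s := by
  rw [cpow, exp_apply, coeFn_smul, Pi.smul_apply, logOneAdd_apply hu, coeFn_sub, Pi.sub_apply,
    infty_coeFn_one, Pi.one_apply, add_sub_cancel, smul_eq_mul, ← Complex.exp_eq_exp_ℂ,
    Complex.cpow_def_of_ne_zero (apply_ne_zero_of_norm_sub_one_lt hu i), mul_comm]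

theorem analyticAt_cpow (hu : ‖u - 1‖ < 1) (s : ℂ) :
    AnalyticAt ℂ (fun q : lp (fun _ : α => ℂ) ∞ × ℂ => cpow q.1 q.2) (u, s) :=
  (NormedSpace.exp_analytic _).comp <| analyticAt_snd.smul <| (analyticAt_logOneAdd hu).comp
    (f := fun q : _ × ℂ => q.1 - 1) (analyticAt_fst.sub analyticAt_const)

end Cpow

end lp

theorem Complex.div_ofReal_cpow {z : ℂ} (hz : z ≠ 0) {r : ℝ} (hr : 0 < r) (s : ℂ) :
    (z / r) ^ s = z ^ s / (r : ℂ) ^ s := by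
  have hr' : (r : ℂ) ≠ 0 := ofReal_ne_zero.2 hr.ne'
  rw [cpow_def_of_ne_zero (div_ne_zero hz hr'), cpow_def_of_ne_zero hz, cpow_def_of_ne_zero hr',
    div_eq_mul_inv z, ← ofReal_inv, log_mul_ofReal _ (inv_pos.2 hr) _ hz, Real.log_inv, ofReal_neg,
    ofReal_log hr.le, ← exp_sub]
  ring_nf

theorem div_natCast_add_one_cpow {z : ℂ} (hz : z ≠ 0) (n : ℕ) (s : ℂ) :
    (z / ((n : ℂ) + 1)) ^ s = z ^ s * ((n : ℂ) + 1) ^ (-s) := by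
  have := Complex.div_ofReal_cpow hz (n.cast_add_one_pos (α := ℝ)) s
  push_cast at this
  rw [this, Complex.cpow_neg, div_eq_mul_inv]

/-- Only meaningful for `1 < s.re`; otherwise the series diverges and `tsum` gives `0`. -/
def dirichletKernel (s : ℂ) : lp (fun _ : ℕ => ℂ) 1 :=
  ∑' n : ℕ, lp.single 1 n (((n : ℂ) + 1) ^ (-s))

theorem norm_natCast_add_one_cpow_neg (n : ℕ) (s : ℂ) :
    ‖((n : ℂ) + 1) ^ (-s)‖ = ((n : ℝ) + 1) ^ (-s.re) := by
  simpa using Complex.norm_natCast_cpow_of_pos n.succ_pos (-s)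

theorem summable_natCast_add_one_rpow_neg {σ : ℝ} (hσ : 1 < σ) :
    Summable fun n : ℕ => ((n : ℝ) + 1) ^ (-σ) := by
  simpa using (summable_nat_add_iff 1).2 (Real.summable_nat_rpow.2 (neg_lt_neg hσ))

theorem norm_single_natCast_add_one_cpow_neg_le {σ : ℝ} {s : ℂ} (hs : σ ≤ s.re) (n : ℕ) :
    ‖lp.single (E := fun _ : ℕ => ℂ) 1 n (((n : ℂ) + 1) ^ (-s))‖ ≤ ((n : ℝ) + 1) ^ (-σ) := by
  rw [lp.norm_single zero_lt_one, norm_natCast_add_one_cpow_neg]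
  exact Real.rpow_le_rpow_of_exponent_le (by linarith [n.cast_nonneg (α := ℝ)]) (neg_le_neg hs)

theorem summable_dirichletKernel {s : ℂ} (hs : 1 < s.re) :
    Summable fun n : ℕ => lp.single (E := fun _ : ℕ => ℂ) 1 n (((n : ℂ) + 1) ^ (-s)) :=
  .of_norm_bounded (summable_natCast_add_one_rpow_neg hs)
    (norm_single_natCast_add_one_cpow_neg_le le_rfl)

theorem dirichletKernel_apply {s : ℂ} (hs : 1 < s.re) (n : ℕ) :
    dirichletKernel s n = ((n : ℂ) + 1) ^ (-s) := by
  change lp.evalCLM ℂ _ 1 n (∑' m : ℕ, _) = _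
  rw [ContinuousLinearMap.map_tsum _ (summable_dirichletKernel hs),
    tsum_eq_single n fun m hm => lp.single_apply_ne 1 m _ (Ne.symm hm)]
  exact lp.single_apply_self 1 n _

theorem analyticAt_dirichletKernel {s : ℂ} (hs : 1 < s.re) : AnalyticAt ℂ dirichletKernel s := by
  obtain ⟨σ, hσ, hσs⟩ := exists_between hs
  have hU : IsOpen {w : ℂ | σ < w.re} := isOpen_lt continuous_const Complex.continuous_re
  have hterm (n : ℕ) :
      Differentiable ℂ fun w : ℂ => lp.single (E := fun _ : ℕ => ℂ) 1 n (((n : ℂ) + 1) ^ (-w)) :=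
    (lp.singleContinuousLinearMap ℂ (fun _ : ℕ => ℂ) 1 n).differentiable.comp
      (differentiable_neg.const_cpow (Or.inl n.cast_add_one_ne_zero))
  refine DifferentiableOn.analyticAt ?_ (hU.mem_nhds hσs)
  exact Complex.differentiableOn_tsum_of_summable_norm (summable_natCast_add_one_rpow_neg hσ)
    (fun n => (hterm n).differentiableOn) hU
    fun n _ hw => norm_single_natCast_add_one_cpow_neg_le hw.le n

theorem mul_div_natCast_add_one_cpow_eq {b u : lp (fun _ : ℕ => ℂ) ∞} {s : ℂ} (hu : ‖u - 1‖ < 1)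
    (hs : 1 < s.re) (n : ℕ) :
    b n * (u n / ((n : ℂ) + 1)) ^ s = (b * lp.cpow u s) n * dirichletKernel s n := by
  rw [lp.infty_coeFn_mul, Pi.mul_apply, lp.cpow_apply hu, dirichletKernel_apply hs,
    div_natCast_add_one_cpow (lp.apply_ne_zero_of_norm_sub_one_lt hu n), mul_assoc]

end

/-- The Euler–Riemann zeta function `ζ(b, z, s) = ∑ b n (z n)^s`, written with
`z n = u n / (n+1)` for `u` in the unit ball centered at the constant sequence `1`,
converges absolutely and is analytic in the triple `(b, u, s)` on
`ℓ∞ × B(1,1) × H₁`. -/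
theorem zeta_ER_analytic :
    (∀ (b u : lp (fun _ : ℕ => ℂ) ∞) (s : ℂ), ‖u - 1‖ < 1 → 1 < s.re →
      Summable fun n : ℕ => ‖b n * (u n / ((n : ℂ) + 1)) ^ s‖) ∧
    AnalyticOnNhd ℂ
      (fun p : lp (fun _ : ℕ => ℂ) ∞ × lp (fun _ : ℕ => ℂ) ∞ × ℂ =>
        ∑' n : ℕ, p.1 n * (p.2.1 n / ((n : ℂ) + 1)) ^ p.2.2)
      {p : lp (fun _ : ℕ => ℂ) ∞ × lp (fun _ : ℕ => ℂ) ∞ × ℂ |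
        ‖p.2.1 - 1‖ < 1 ∧ 1 < p.2.2.re} := by
  refine ⟨fun b u s hu hs => ?_, fun p hp => ?_⟩
  · simpa only [mul_div_natCast_add_one_cpow_eq hu hs] using
      lp.summable_norm_mul_infty_one (b * lp.cpow u s) (dirichletKernel s)
  · have hopen : IsOpen {p : lp (fun _ : ℕ => ℂ) ∞ × lp (fun _ : ℕ => ℂ) ∞ × ℂ |
        ‖p.2.1 - 1‖ < 1 ∧ 1 < p.2.2.re} :=
      (isOpen_lt (continuous_snd.fst.sub continuous_const).norm continuous_const).inter
        (isOpen_lt continuous_const (Complex.continuous_re.comp continuous_snd.snd))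
    have hpairing : AnalyticAt ℂ (fun q : lp (fun _ : ℕ => ℂ) ∞ × lp (fun _ : ℕ => ℂ) ∞ × ℂ =>
        lp.pairingInftyOne ℂ (q.1 * lp.cpow q.2.1 q.2.2) (dirichletKernel q.2.2)) p :=
      ((lp.pairingInftyOne ℂ).analyticAt_bilinear _).comp₂
        (analyticAt_fst.mul
          ((lp.analyticAt_cpow hp.1 p.2.2).comp (f := Prod.snd) analyticAt_snd))
        ((analyticAt_dirichletKernel hp.2).comp (f := Prod.snd ∘ Prod.snd)
          (analyticAt_snd.comp analyticAt_snd))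
    refine hpairing.congr (Filter.eventuallyEq_of_mem (hopen.mem_nhds hp) fun q hq => ?_)
    simp only [lp.pairingInftyOne_apply, mul_div_natCast_add_one_cpow_eq hq.1 hq.2]
end

section
/- Fix b : ℕ → ℂ bounded, z : ℕ → ℂ with z n ≠ 0 for all n, ε := ⨅_n (n+1)·|z n| > 0 and sup_n (n+1)·|z n| < ∞, and a bounded θ : ℕ → ℝ with z n = |z n|·exp(i·θ n) for all n; write z_n^c := exp(c·(log|z n| + i·θ n)). Let η ≥ 0, let β satisfy 0 < β < ε, let s ∈ ℂ with Re s > 1 − η, and let w : ℕ → ℂ satisfy |w n| ≤ β/(n+1)^{1+η} for all n. Then the doubly indexed family over (m, n) ∈ ℕ × ℕ given by ((∏_{i=0}^{m} (s − i))/(m+1)!) · b n · z_n^{s−(m+1)} · (w n)^{m+1} is absolutely summable (the family of its norms is summable over ℕ × ℕ). -/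
/-!
With `L n = log ‖z n‖ + I θ n`, the `(m, n)` term is
`choose s (m + 1) * b n * exp (s L n) * (w n * exp (-L n)) ^ (m + 1)`,
and `‖exp (-L n)‖ = 1 / ‖z n‖`.
Because `ε ≤ (n + 1) ‖z n‖ ≤ M`, the factor `‖exp (s L n)‖` is `O((n + 1) ^ (-Re s))` (with `θ`
bounded), while `‖w n‖ / ‖z n‖ ≤ (β / ε) (n + 1) ^ (-η)`. Hence the term is dominated by
`‖choose s (m + 1)‖ q ^ (m + 1) * C (n + 1) ^ (-(Re s + η))` with `q = β / ε < 1`: a product of the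
binomial series at `q`, whose radius of convergence is at least `1`, and a convergent `p`-series.
-/

open Finset Complex

theorem Ring.choose_eq_prod_range_sub_div_factorial {𝕂 : Type*} [Field 𝕂] [CharZero 𝕂]
    (a : 𝕂) (n : ℕ) : (∏ i ∈ range n, (a - i)) / n.factorial = Ring.choose a n := by
  rw [div_eq_iff (by exact_mod_cast n.factorial_ne_zero), ← descPochhammer_eval_eq_prod_range,
    ← descPochhammer_map (algebraMap ℤ 𝕂), Polynomial.eval_map_algebraMap,
    Polynomial.aeval_eq_smeval, Ring.descPochhammer_eq_factorial_smul_choose, nsmul_eq_mul,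
    mul_comm]

theorem summable_norm_choose_mul_pow {𝕂 : Type*} [RCLike 𝕂] (a : 𝕂) {q : ℝ} (hq0 : 0 ≤ q)
    (hq1 : q < 1) : Summable fun n ↦ ‖Ring.choose a n‖ * q ^ n := by
  lift q to NNReal using hq0
  have := (binomialSeries 𝕂 a).summable_norm_mul_pow (r := q)
    (lt_of_lt_of_le (by exact_mod_cast hq1) binomialSeries_radius_ge_one)
  simpa [binomialSeries, FormalMultilinearSeries.ofScalars_norm] using this

theorem Complex.norm_exp_mul_log_add_I_mul {R : ℝ} (hR : 0 < R) (c : ℂ) (θ : ℝ) :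
    ‖exp (c * (Real.log R + I * θ))‖ = R ^ c.re * Real.exp (-(c.im * θ)) := by
  rw [norm_exp, Real.rpow_def_of_pos hR, ← Real.exp_add]
  congr 1
  simp only [mul_re, add_re, ofReal_re, I_re, zero_mul, I_im, ofReal_im, mul_zero, sub_self,
    add_zero, add_im, mul_im, one_mul, zero_add]
  ring

theorem Complex.exp_sub_natCast_mul (s L : ℂ) (k : ℕ) :
    exp ((s - k) * L) = exp (s * L) * exp (-L) ^ k := by
  rw [← exp_nat_mul, ← exp_add]
  ring_nf

theorem norm_taylor_term_eq (s b w : ℂ) {R : ℝ} (hR : 0 < R) (θ : ℝ) (k : ℕ) :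
    ‖(∏ i ∈ range k, (s - i)) / (k.factorial : ℂ) * b * exp ((s - k) * (Real.log R + I * θ)) *
        w ^ k‖ =
      ‖Ring.choose s k‖ * ‖b‖ * (R ^ s.re * Real.exp (-(s.im * θ))) * (‖w‖ / R) ^ k := by
  rw [Ring.choose_eq_prod_range_sub_div_factorial, exp_sub_natCast_mul, ← neg_one_mul]
  simp only [norm_mul, norm_pow, norm_exp_mul_log_add_I_mul hR]
  simp only [neg_re, one_re, Real.rpow_neg_one, neg_im, one_im, neg_zero, zero_mul,
    Real.exp_zero, mul_one, inv_pow, div_eq_mul_inv, mul_pow]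
  ring

theorem Real.rpow_le_max_of_mem_Icc {a b t : ℝ} (ha : 0 < a) (hat : a ≤ t) (htb : t ≤ b)
    (σ : ℝ) : t ^ σ ≤ max (a ^ σ) (b ^ σ) := by
  rcases le_total 0 σ with hσ | hσ
  · exact le_max_of_le_right (Real.rpow_le_rpow (ha.trans_le hat).le htb hσ)
  · exact le_max_of_le_left (Real.rpow_le_rpow_of_nonpos ha hat hσ)

theorem rpow_le_max_mul_rpow_neg {R u ε M : ℝ} (hu : 0 < u) (hε : 0 < ε) (hεR : ε ≤ u * R)
    (hRM : u * R ≤ M) (σ : ℝ) : R ^ σ ≤ max (ε ^ σ) (M ^ σ) * u ^ (-σ) := by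
  have hR : 0 < R := pos_of_mul_pos_right (hε.trans_le hεR) hu.le
  calc R ^ σ = (u * R) ^ σ * u ^ (-σ) := by
        rw [Real.mul_rpow hu.le hR.le, Real.rpow_neg hu.le]; field_simp
    _ ≤ max (ε ^ σ) (M ^ σ) * u ^ (-σ) := by
        gcongr
        exact Real.rpow_le_max_of_mem_Icc hε hεR hRM σ

theorem div_pow_le_pow_mul_rpow_neg {x R u ε β η : ℝ} (hx : 0 ≤ x) (hu : 1 ≤ u) (hη : 0 ≤ η)
    (hε : 0 < ε) (hεR : ε ≤ u * R) (hxβ : x ≤ β / u ^ (1 + η)) {k : ℕ} (hk : k ≠ 0) :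
    (x / R) ^ k ≤ (β / ε) ^ k * u ^ (-η) := by
  have hu0 : 0 < u := one_pos.trans_le hu
  have hR : 0 < R := pos_of_mul_pos_right (hε.trans_le hεR) hu0.le
  have hβ : 0 ≤ β := by
    have := hx.trans hxβ
    rwa [le_div_iff₀ (by positivity), zero_mul] at this
  have hratio : x / R ≤ β / ε * u ^ (-η) :=
    calc x / R ≤ β / u ^ (1 + η) / R := by gcongr
      _ = β / (u ^ η * (u * R)) := by
          rw [Real.rpow_add hu0, Real.rpow_one, div_div]; ring_nf
      _ ≤ β / (u ^ η * ε) := by gcongr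
      _ = β / ε * u ^ (-η) := by rw [Real.rpow_neg hu0.le]; field_simp
  calc (x / R) ^ k ≤ (β / ε * u ^ (-η)) ^ k := by gcongr
    _ = (β / ε) ^ k * (u ^ (-η)) ^ k := mul_pow _ _ _
    _ ≤ (β / ε) ^ k * u ^ (-η) := by
        gcongr
        exact pow_le_of_le_one (by positivity)
          (Real.rpow_le_one_of_one_le_of_nonpos hu (neg_nonpos.2 hη)) hk

theorem summable_nat_add_one_rpow_neg {p : ℝ} (hp : 1 < p) :
    Summable fun n : ℕ ↦ ((n : ℝ) + 1) ^ (-p) := by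
  simpa using (summable_nat_add_iff 1).2 (Real.summable_nat_rpow.2 (neg_lt_neg hp))

theorem zeta_taylor_summable_polydisc_general
    (b : ℕ → ℂ) (hb : ∃ M : ℝ, ∀ n, ‖b n‖ ≤ M)
    (z : ℕ → ℂ)
    (hbig : ∃ M : ℝ, ∀ n : ℕ, ((n : ℝ) + 1) * ‖z n‖ ≤ M)
    (θ : ℕ → ℝ) (hθ : ∃ Θ : ℝ, ∀ n, |θ n| ≤ Θ)
    (η : ℝ) (hη : 0 ≤ η)
    (β : ℝ) (hβ : β < ⨅ n : ℕ, ((n : ℝ) + 1) * ‖z n‖)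
    (s : ℂ) (hs : 1 - η < s.re)
    (w : ℕ → ℂ) (hw : ∀ n : ℕ, ‖w n‖ ≤ β / ((n : ℝ) + 1) ^ ((1 : ℝ) + η)) :
    Summable fun p : ℕ × ℕ =>
      ‖(∏ i ∈ Finset.range (p.1 + 1), (s - (i : ℂ))) / ((Nat.factorial (p.1 + 1) : ℂ)) *
        b p.2 *
        Complex.exp ((s - ((p.1 : ℂ) + 1)) *
          (Real.log (‖z p.2‖) + Complex.I * θ p.2)) *
        (w p.2) ^ (p.1 + 1)‖ := by
  obtain ⟨Mb, hMb⟩ := hb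
  obtain ⟨M, hM⟩ := hbig
  obtain ⟨Θ, hΘ⟩ := hθ
  set ε := ⨅ n : ℕ, ((n : ℝ) + 1) * ‖z n‖
  have hεz : ∀ n : ℕ, ε ≤ ((n : ℝ) + 1) * ‖z n‖ :=
    ciInf_le ⟨0, by rintro _ ⟨n, rfl⟩; positivity⟩
  have hβ0 : 0 ≤ β := by simpa using (norm_nonneg _).trans (hw 0)
  have hε : 0 < ε := hβ0.trans_lt hβ
  have hMb0 : 0 ≤ Mb := (norm_nonneg _).trans (hMb 0)
  have hq : 0 ≤ β / ε := div_nonneg hβ0 hε.le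
  have hcoef := (summable_norm_choose_mul_pow s hq
    ((div_lt_one hε).2 hβ)).comp_injective (add_left_injective 1)
  have hpow := summable_nat_add_one_rpow_neg (p := s.re + η) (by linarith)
  have hC : 0 ≤ Mb * Real.exp (|s.im| * Θ) * max (ε ^ s.re) (M ^ s.re) :=
    mul_nonneg (mul_nonneg hMb0 (Real.exp_pos _).le) (le_max_of_le_left (Real.rpow_nonneg hε.le _))
  refine .of_nonneg_of_le (fun _ ↦ norm_nonneg _) (fun ⟨m, n⟩ ↦ ?_)
    (hcoef.mul_of_nonneg (hpow.mul_left _) (fun _ ↦ mul_nonneg (norm_nonneg _) (pow_nonneg hq _))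
      (fun _ ↦ mul_nonneg hC (by positivity)))
  have hu : (1 : ℝ) ≤ n + 1 := by simp
  have hz : 0 < ‖z n‖ := pos_of_mul_pos_right (hε.trans_le (hεz n)) (by positivity)
  have hθn : Real.exp (-(s.im * θ n)) ≤ Real.exp (|s.im| * Θ) :=
    Real.exp_le_exp.2 ((neg_le_abs _).trans (by rw [abs_mul]; gcongr; exact hΘ n))
  have hterm := norm_taylor_term_eq s (b n) (w n) hz (θ n) (m + 1)
  rw [Nat.cast_succ] at hterm
  dsimp only [Function.comp_apply]
  rw [hterm]
  calc _ ≤ ‖Ring.choose s (m + 1)‖ * Mb * (max (ε ^ s.re) (M ^ s.re) * ((n : ℝ) + 1) ^ (-s.re) *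
          Real.exp (|s.im| * Θ)) * ((β / ε) ^ (m + 1) * ((n : ℝ) + 1) ^ (-η)) := by
        gcongr
        · exact hMb n
        · exact rpow_le_max_mul_rpow_neg (by positivity) hε (hεz n) (hM n) _
        · exact div_pow_le_pow_mul_rpow_neg (norm_nonneg _) hu hη hε (hεz n) (hw n) m.succ_ne_zero
    _ = _ := by rw [neg_add, Real.rpow_add (by positivity)]; ring

/-- Convergence of the Taylor expansion of `ζ(b, z, s) = ∑ b n (z n)^s` in the
vectorial variable `z` (item (ii) of Lemma on the Taylor expansion): for `η ≥ 0`,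
`Re s > 1 − η`, `0 < β < ε = ⨅ (n+1)|z n|`, and `|w n| ≤ β/(n+1)^{1+η}`, the doubly
indexed family of Taylor terms is absolutely summable. -/
theorem zeta_taylor_summable_polydisc
    (b : ℕ → ℂ) (hb : ∃ M : ℝ, ∀ n, ‖b n‖ ≤ M)
    (z : ℕ → ℂ) (hz : ∀ n, z n ≠ 0)
    (hε : 0 < ⨅ n : ℕ, ((n : ℝ) + 1) * ‖z n‖)
    (hbig : ∃ M : ℝ, ∀ n : ℕ, ((n : ℝ) + 1) * ‖z n‖ ≤ M)
    (θ : ℕ → ℝ) (hθ : ∃ Θ : ℝ, ∀ n, |θ n| ≤ Θ)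
    (harg : ∀ n : ℕ, z n = (‖z n‖ : ℂ) * Complex.exp (Complex.I * θ n))
    (η : ℝ) (hη : 0 ≤ η)
    (β : ℝ) (hβ0 : 0 < β) (hβ : β < ⨅ n : ℕ, ((n : ℝ) + 1) * ‖z n‖)
    (s : ℂ) (hs : 1 - η < s.re)
    (w : ℕ → ℂ) (hw : ∀ n : ℕ, ‖w n‖ ≤ β / ((n : ℝ) + 1) ^ ((1 : ℝ) + η)) :
    Summable fun p : ℕ × ℕ =>
      ‖(∏ i ∈ Finset.range (p.1 + 1), (s - (i : ℂ))) / ((Nat.factorial (p.1 + 1) : ℂ)) *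
        b p.2 *
        Complex.exp ((s - ((p.1 : ℂ) + 1)) *
          (Real.log (‖z p.2‖) + Complex.I * θ p.2)) *
        (w p.2) ^ (p.1 + 1)‖ :=
  zeta_taylor_summable_polydisc_general b hb z hbig θ hθ η hη β hβ s hs w hw
end

section
/- Fix b : ℕ → ℂ bounded, z : ℕ → ℂ with z n ≠ 0 for all n, ε := ⨅_n (n+1)·|z n| > 0 and sup_n (n+1)·|z n| < ∞, and a bounded θ : ℕ → ℝ with z n = |z n|·exp(i·θ n) for all n; write z_n^c := exp(c·(log|z n| + i·θ n)). Let η > 0, let β satisfy 0 < β < ε, let s ∈ ℂ be arbitrary, and let w : ℕ → ℂ satisfy |w n| ≤ β·exp(−η·(n+1))/(n+1) for all n. Then the doubly indexed family over (m, n) ∈ ℕ × ℕ given by ((∏_{i=0}^{m} (s − i))/(m+1)!) · b n · z_n^{s−(m+1)} · (w n)^{m+1} is absolutely summable (the family of its norms is summable over ℕ × ℕ). -/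
/-!
With `q = β / ε < 1`, the hypothesis on `w` gives `‖w n‖ / ‖z n‖ ≤ q e^{-η(n+1)}`, so the
`(m, n)` term is at most `‖s(s-1)⋯(s-m)/(m+1)!‖ q^{m+1}` times `‖b n‖ ‖z_n^s‖ e^{-η(n+1)}`.
The first factor is summable in `m` by comparison with the binomial series
`∑ C(m + K, K) q^m`, `K = ⌈‖s‖⌉`; the second is summable in `n` because
`ε / (n+1) ≤ ‖z n‖ ≤ M` and the boundedness of `θ` make `‖z_n^s‖` grow at most like
`(n+1)^K`, while `e^{-η(n+1)}` decays exponentially.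
-/

open Finset Complex
open scoped Nat

section DescendingProduct

variable {𝕜 : Type*} [RCLike 𝕜]

theorem norm_prod_range_sub_natCast_le (s : 𝕜) (k : ℕ) :
    ‖∏ i ∈ range k, (s - i)‖ ≤ k ! * (k + ⌈‖s‖⌉₊).choose ⌈‖s‖⌉₊ := by
  set K := ⌈‖s‖⌉₊
  have hasc : ((k ! * (k + K).choose K : ℕ) : ℝ) = ∏ i ∈ range k, ((K : ℝ) + 1 + i) := by
    rw [add_comm k K, Nat.choose_symm_add, ← Nat.ascFactorial_eq_factorial_mul_choose,
      Nat.ascFactorial_eq_prod_range]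
    push_cast
    rfl
  rw [norm_prod, ← Nat.cast_mul, hasc]
  refine prod_le_prod (fun _ _ => norm_nonneg _) fun i _ => ?_
  calc ‖s - i‖ ≤ ‖s‖ + i := (norm_sub_le _ _).trans_eq (by rw [RCLike.norm_natCast])
    _ ≤ K + 1 + i := by linarith [Nat.le_ceil ‖s‖]

theorem summable_norm_prod_range_sub_div_factorial_mul_pow (s : 𝕜) {q : ℝ} (hq0 : 0 ≤ q)
    (hq1 : q < 1) : Summable fun k => ‖(∏ i ∈ range k, (s - i)) / (k ! : 𝕜)‖ * q ^ k := by
  refine (summable_choose_mul_geometric_of_norm_lt_one ⌈‖s‖⌉₊ (r := q)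
    (by rwa [Real.norm_of_nonneg hq0])).of_nonneg_of_le (fun _ => by positivity) fun k => ?_
  rw [norm_div, RCLike.norm_natCast]
  gcongr
  rw [div_le_iff₀ (by positivity)]
  linarith [norm_prod_range_sub_natCast_le s k]

end DescendingProduct

theorem Complex.norm_exp_log_add_I_mul {r : ℝ} (hr : 0 < r) (t : ℝ) :
    ‖exp (Real.log r + I * t)‖ = r := by
  simp [Complex.norm_exp, Real.exp_log hr]

theorem Complex.norm_exp_sub_natCast_mul_log_add_I_mul (s : ℂ) (k : ℕ) {r : ℝ} (hr : 0 < r)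
    (t : ℝ) :
    ‖exp ((s - k) * (Real.log r + I * t))‖ = ‖exp (s * (Real.log r + I * t))‖ / r ^ k := by
  rw [sub_mul, exp_sub, norm_div, exp_nat_mul, norm_pow, norm_exp_log_add_I_mul hr]

theorem Complex.norm_exp_mul_add_I_mul_le (s : ℂ) (a t : ℝ) :
    ‖exp (s * (a + I * t))‖ ≤ Real.exp (‖s‖ * (|a| + |t|)) := by
  refine (norm_exp_le_exp_norm _).trans (Real.exp_le_exp.2 ?_)
  rw [norm_mul]
  gcongr
  refine (norm_add_le _ _).trans_eq ?_
  simp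

theorem div_le_div_of_le_div_of_le_mul {a c ε x r : ℝ} (hc : 0 ≤ c) (hε : 0 < ε) (hr : 0 < r)
    (ha : a ≤ c / x) (hεr : ε ≤ x * r) : a / r ≤ c / ε :=
  calc a / r ≤ c / x / r := div_le_div_of_nonneg_right ha hr.le
    _ = c / (x * r) := div_div _ _ _
    _ ≤ c / ε := div_le_div_of_nonneg_left hc hε hεr

theorem Real.abs_log_le_log_add_of_le_mul {ε M x r : ℝ} (hε : 0 < ε) (hx : 1 ≤ x)
    (hεr : ε ≤ x * r) (hrM : r ≤ M) : |log r| ≤ log x + max |log ε| |log M| := by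
  have hr : 0 < r := pos_of_mul_pos_right (hε.trans_le hεr) (by linarith)
  have hlogx : 0 ≤ log x := log_nonneg hx
  have hlower : log ε ≤ log x + log r := by
    rw [← log_mul (by linarith) hr.ne']
    exact log_le_log hε hεr
  have hupper : log r ≤ log M := log_le_log hr hrM
  rw [abs_le]
  constructor <;>
  linarith [le_abs_self (log M), neg_abs_le (log ε), le_max_left |log ε| |log M|,
    le_max_right |log ε| |log M|]

theorem Complex.norm_exp_mul_log_add_I_mul_le_pow {ε M Θ x r t : ℝ} (hε : 0 < ε) (hx : 1 ≤ x)
    (hεr : ε ≤ x * r) (hrM : r ≤ M) (ht : |t| ≤ Θ) (s : ℂ) :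
    ‖exp (s * (Real.log r + I * t))‖ ≤
      Real.exp (‖s‖ * (max |Real.log ε| |Real.log M| + Θ)) * x ^ ⌈‖s‖⌉₊ := by
  have hlog := Real.abs_log_le_log_add_of_le_mul hε hx hεr hrM
  calc ‖exp (s * (Real.log r + I * t))‖
      ≤ Real.exp (‖s‖ * (Real.log x + (max |Real.log ε| |Real.log M| + Θ))) := by
        refine (norm_exp_mul_add_I_mul_le s _ t).trans (Real.exp_le_exp.2 ?_)
        exact mul_le_mul_of_nonneg_left (by linarith) (norm_nonneg s)
    _ = Real.exp (‖s‖ * (max |Real.log ε| |Real.log M| + Θ)) * x ^ ‖s‖ := by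
        rw [Real.rpow_def_of_pos (by linarith), ← Real.exp_add]
        ring_nf
    _ ≤ _ := by
        gcongr
        rw [← Real.rpow_natCast]
        exact Real.rpow_le_rpow_of_exponent_le hx (Nat.le_ceil _)

theorem summable_norm_mul_norm_exp_mul_log_add_I_mul_mul_exp_neg {b : ℕ → ℂ} {r θ : ℕ → ℝ}
    {B ε M Θ η : ℝ} (hb : ∀ n, ‖b n‖ ≤ B) (hε : 0 < ε) (hεr : ∀ n : ℕ, ε ≤ ((n : ℝ) + 1) * r n)
    (hrM : ∀ n, r n ≤ M) (hθ : ∀ n, |θ n| ≤ Θ) (hη : 0 < η) (s : ℂ) :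
    Summable fun n : ℕ => ‖b n‖ * ‖exp (s * (Real.log (r n) + I * θ n))‖ *
      Real.exp (-η * ((n : ℝ) + 1)) := by
  set C := Real.exp (‖s‖ * (max |Real.log ε| |Real.log M| + Θ))
  have hB : 0 ≤ B := (norm_nonneg _).trans (hb 0)
  have hpoly : Summable fun n : ℕ => ((n : ℝ) + 1) ^ ⌈‖s‖⌉₊ * Real.exp (-η * ((n : ℝ) + 1)) := by
    simpa using (summable_nat_add_iff 1).2 (Real.summable_pow_mul_exp_neg_nat_mul ⌈‖s‖⌉₊ hη)
  refine (hpoly.mul_left (B * C)).of_nonneg_of_le (fun _ => by positivity) fun n => ?_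
  have hn : (1 : ℝ) ≤ n + 1 := by linarith [n.cast_nonneg (α := ℝ)]
  calc _ ≤ B * (C * ((n : ℝ) + 1) ^ ⌈‖s‖⌉₊) * Real.exp (-η * ((n : ℝ) + 1)) := by
        gcongr
        · exact hb n
        · exact norm_exp_mul_log_add_I_mul_le_pow hε hn (hεr n) (hrM n) (hθ n) s
    _ = _ := by ring

theorem norm_taylor_term_le {s b w : ℂ} {r t q δ : ℝ} (m : ℕ) (hr : 0 < r) (hq : 0 ≤ q)
    (hw : ‖w‖ / r ≤ q * δ) (hδ0 : 0 ≤ δ) (hδ1 : δ ≤ 1) :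
    ‖(∏ i ∈ range (m + 1), (s - i)) / ((m + 1)! : ℂ) * b *
        exp ((s - ((m : ℂ) + 1)) * (Real.log r + I * t)) * w ^ (m + 1)‖ ≤
      ‖(∏ i ∈ range (m + 1), (s - i)) / ((m + 1)! : ℂ)‖ * q ^ (m + 1) *
        (‖b‖ * ‖exp (s * (Real.log r + I * t))‖ * δ) := by
  have hpow : (‖w‖ / r) ^ (m + 1) ≤ q ^ (m + 1) * δ :=
    calc (‖w‖ / r) ^ (m + 1) ≤ (q * δ) ^ (m + 1) := by gcongr
      _ = q ^ (m + 1) * δ ^ (m + 1) := mul_pow _ _ _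
      _ ≤ q ^ (m + 1) * δ := by gcongr; exact pow_le_of_le_one hδ0 hδ1 m.succ_ne_zero
  have hcast : (m : ℂ) + 1 = ((m + 1 : ℕ) : ℂ) := by push_cast; rfl
  rw [norm_mul, norm_mul, norm_mul, norm_pow, hcast,
    norm_exp_sub_natCast_mul_log_add_I_mul s _ hr]
  calc _ = ‖(∏ i ∈ range (m + 1), (s - i)) / ((m + 1)! : ℂ)‖ *
        (‖b‖ * ‖exp (s * (Real.log r + I * t))‖) * (‖w‖ / r) ^ (m + 1) := by
        rw [div_pow]; ring
    _ ≤ ‖(∏ i ∈ range (m + 1), (s - i)) / ((m + 1)! : ℂ)‖ *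
        (‖b‖ * ‖exp (s * (Real.log r + I * t))‖) * (q ^ (m + 1) * δ) := by gcongr
    _ = _ := by ring

theorem zeta_taylor_summable_exp_polydisc_general
    (b : ℕ → ℂ) (hb : ∃ M : ℝ, ∀ n, ‖b n‖ ≤ M)
    (z : ℕ → ℂ) (hz : ∀ n, z n ≠ 0)
    (hε : 0 < ⨅ n : ℕ, ((n : ℝ) + 1) * ‖z n‖)
    (hbig : ∃ M : ℝ, ∀ n : ℕ, ((n : ℝ) + 1) * ‖z n‖ ≤ M)
    (θ : ℕ → ℝ) (hθ : ∃ Θ : ℝ, ∀ n, |θ n| ≤ Θ)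
    (η : ℝ) (hη : 0 < η)
    (β : ℝ) (hβ0 : 0 < β) (hβ : β < ⨅ n : ℕ, ((n : ℝ) + 1) * ‖z n‖)
    (s : ℂ)
    (w : ℕ → ℂ) (hw : ∀ n : ℕ, ‖w n‖ ≤ β * Real.exp (-η * ((n : ℝ) + 1)) / ((n : ℝ) + 1)) :
    Summable fun p : ℕ × ℕ =>
      ‖(∏ i ∈ Finset.range (p.1 + 1), (s - (i : ℂ))) / ((Nat.factorial (p.1 + 1) : ℂ)) *
        b p.2 *
        Complex.exp ((s - ((p.1 : ℂ) + 1)) *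
          (Real.log (‖z p.2‖) + Complex.I * θ p.2)) *
        (w p.2) ^ (p.1 + 1)‖ := by
  obtain ⟨B, hB⟩ := hb
  obtain ⟨M, hM⟩ := hbig
  obtain ⟨Θ, hΘ⟩ := hθ
  set ε := ⨅ n : ℕ, ((n : ℝ) + 1) * ‖z n‖
  have hεle (n : ℕ) : ε ≤ ((n : ℝ) + 1) * ‖z n‖ :=
    ciInf_le ⟨0, by rintro _ ⟨k, rfl⟩; positivity⟩ n
  have hr (n : ℕ) : 0 < ‖z n‖ := norm_pos_iff.2 (hz n)
  have hrM (n : ℕ) : ‖z n‖ ≤ M := le_mul_of_one_le_left (hr n).le (by simp) |>.trans (hM n)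
  have hq : 0 ≤ β / ε := by positivity
  have hwz (n : ℕ) : ‖w n‖ / ‖z n‖ ≤ β / ε * Real.exp (-η * ((n : ℝ) + 1)) :=
    (div_le_div_of_le_div_of_le_mul (by positivity) hε (hr n) (hw n) (hεle n)).trans_eq
      (by ring)
  have hδ1 (n : ℕ) : Real.exp (-η * ((n : ℝ) + 1)) ≤ 1 :=
    Real.exp_le_one_iff.2 (by nlinarith [n.cast_nonneg (α := ℝ)])
  have hcoeff := (summable_nat_add_iff 1).2
    (summable_norm_prod_range_sub_div_factorial_mul_pow s hq ((div_lt_one hε).2 hβ))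
  refine (hcoeff.mul_of_nonneg
    (summable_norm_mul_norm_exp_mul_log_add_I_mul_mul_exp_neg hB hε hεle hrM hΘ hη s)
    (fun _ => by positivity) (fun _ => by positivity)).of_nonneg_of_le (fun _ => norm_nonneg _)
    fun p => norm_taylor_term_le p.1 (hr p.2) hq (hwz p.2) (Real.exp_nonneg _) (hδ1 p.2)

/-- Convergence of the Taylor expansion of `ζ(b, z, s) = ∑ b n (z n)^s` in the
vectorial variable `z` (item (iii) of Lemma on the Taylor expansion): for `η > 0`,
arbitrary `s ∈ ℂ`, `0 < β < ε = ⨅ (n+1)|z n|`, and `|w n| ≤ β·e^{−η(n+1)}/(n+1)`, the doubly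
indexed family of Taylor terms is absolutely summable. -/
theorem zeta_taylor_summable_exp_polydisc
    (b : ℕ → ℂ) (hb : ∃ M : ℝ, ∀ n, ‖b n‖ ≤ M)
    (z : ℕ → ℂ) (hz : ∀ n, z n ≠ 0)
    (hε : 0 < ⨅ n : ℕ, ((n : ℝ) + 1) * ‖z n‖)
    (hbig : ∃ M : ℝ, ∀ n : ℕ, ((n : ℝ) + 1) * ‖z n‖ ≤ M)
    (θ : ℕ → ℝ) (hθ : ∃ Θ : ℝ, ∀ n, |θ n| ≤ Θ)
    (harg : ∀ n : ℕ, z n = (‖z n‖ : ℂ) * Complex.exp (Complex.I * θ n))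
    (η : ℝ) (hη : 0 < η)
    (β : ℝ) (hβ0 : 0 < β) (hβ : β < ⨅ n : ℕ, ((n : ℝ) + 1) * ‖z n‖)
    (s : ℂ)
    (w : ℕ → ℂ) (hw : ∀ n : ℕ, ‖w n‖ ≤ β * Real.exp (-η * ((n : ℝ) + 1)) / ((n : ℝ) + 1)) :
    Summable fun p : ℕ × ℕ =>
      ‖(∏ i ∈ Finset.range (p.1 + 1), (s - (i : ℂ))) / ((Nat.factorial (p.1 + 1) : ℂ)) *
        b p.2 *
        Complex.exp ((s - ((p.1 : ℂ) + 1)) *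
          (Real.log (‖z p.2‖) + Complex.I * θ p.2)) *
        (w p.2) ^ (p.1 + 1)‖ :=
  zeta_taylor_summable_exp_polydisc_general b hb z hz hε hbig θ hθ η hη β hβ0 hβ s w hw
end

section
/- Fix b : ℕ → ℂ bounded, z : ℕ → ℂ with z n ≠ 0 for all n, ε := ⨅_n (n+1)·|z n| > 0 and sup_n (n+1)·|z n| < ∞, and a bounded θ : ℕ → ℝ with z n = |z n|·exp(i·θ n) for all n; write z_n^c := exp(c·(log|z n| + i·θ n)). Suppose F : ℂ → ℂ is meromorphic on all of ℂ and F(s) = Σ'_n b n · z_n^s for every s with Re s > 1. Let w : ℕ → ℂ satisfy sup_n exp(n+1)·|w n| < ε (this forces |w n| < |z n| for every n, so Arg(1 + (w n)/(z n)) ∈ (−π/2, π/2) is defined). Then there exists G : ℂ → ℂ meromorphic on all of ℂ such that for every s with Re s > 1, G(s) = Σ'_n b n · exp(s·(log|z n + w n| + i·(θ n + Arg(1 + (w n)/(z n))))). -/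
/-!
Write `z n + w n = z n * (1 + t n)` with `t n = w n / z n`. The hypothesis on `w` gives
`‖t n‖ ≤ (n + 1) e^{-(n + 1)}`, so on the chosen branch
`(z n + w n)^s = (z n)^s * exp (s log (1 + t n))` and
`G := F + ∑ b n (z n)^s (exp (s log (1 + t n)) - 1)`. The correction series is entire: for
`‖s‖ ≤ R` the factor `(z n)^s` grows at most like `(n + 1)^R`, because `(n + 1) ‖z n‖` is
bounded above and below and `θ` is bounded, while `exp (s log (1 + t n)) - 1 = O(‖t n‖)` decays
exponentially.
-/

open Complex Metric

theorem differentiable_tsum_of_summable_norm_closedBall {ι : Type*} {f : ι → ℂ → ℂ}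
    (hf : ∀ i, Differentiable ℂ (f i))
    (hbound : ∀ R : ℝ, 0 ≤ R → ∃ u : ι → ℝ, Summable u ∧
      ∀ i, ∀ s ∈ closedBall (0 : ℂ) R, ‖f i s‖ ≤ u i) :
    Differentiable ℂ fun s => ∑' i, f i s := by
  intro s
  obtain ⟨u, hu, hfu⟩ := hbound (‖s‖ + 1) (by positivity)
  have hdiff := differentiableOn_tsum_of_summable_norm hu (fun i => (hf i).differentiableOn)
    isOpen_ball fun i s hs => hfu i s (ball_subset_closedBall hs)
  exact hdiff.differentiableAt (isOpen_ball.mem_nhds (by simp))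

theorem norm_exp_sub_one_le_norm_mul_exp (x : ℂ) : ‖exp x - 1‖ ≤ ‖x‖ * Real.exp ‖x‖ := by
  simpa using norm_exp_sub_sum_le_norm_mul_exp x 1

theorem norm_exp_mul_add_sub_exp_mul_le (s L c : ℂ) :
    ‖exp (s * (L + c)) - exp (s * L)‖ ≤
      Real.exp (‖s‖ * ‖L‖) * (‖s‖ * ‖c‖ * Real.exp (‖s‖ * ‖c‖)) := by
  rw [mul_add, exp_add, ← mul_sub_one, norm_mul, ← norm_mul s L, ← norm_mul s c]
  gcongr
  · exact norm_exp_le_exp_norm _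
  · exact norm_exp_sub_one_le_norm_mul_exp _

theorem Real.exp_mul_log_add_le {R x K : ℝ} (hx : 1 ≤ x) :
    Real.exp (R * (Real.log x + K)) ≤ x ^ ⌈R⌉₊ * Real.exp (R * K) := by
  rw [mul_add, Real.exp_add, ← Real.rpow_natCast, Real.rpow_def_of_pos (by linarith), mul_comm R]
  gcongr
  · exact Real.log_nonneg hx
  · exact Nat.le_ceil R

theorem Real.summable_pow_mul_exp_neg_add_one (k : ℕ) :
    Summable fun n : ℕ => ((n : ℝ) + 1) ^ k * Real.exp (-((n : ℝ) + 1)) := by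
  simpa using (summable_nat_add_iff 1).2 (Real.summable_pow_mul_exp_neg_nat_mul k one_pos)

theorem Real.abs_log_le_log_add {x y a b : ℝ} (ha : 0 < a) (hy : 1 ≤ y) (hax : a ≤ y * x)
    (hxb : y * x ≤ b) : |Real.log x| ≤ Real.log y + max |Real.log a| |Real.log b| := by
  have hx : 0 < x := pos_of_mul_pos_right (ha.trans_le hax) (by linarith)
  have hlog : Real.log (y * x) = Real.log y + Real.log x :=
    Real.log_mul (by positivity) hx.ne'
  have hla : Real.log a ≤ Real.log (y * x) := Real.log_le_log ha hax
  have hlb : Real.log (y * x) ≤ Real.log b := Real.log_le_log (ha.trans_le hax) hxb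
  have hy0 : 0 ≤ Real.log y := Real.log_nonneg hy
  rw [abs_le]
  constructor <;> linarith [neg_abs_le (Real.log a), le_abs_self (Real.log b),
    le_max_left |Real.log a| |Real.log b|, le_max_right |Real.log a| |Real.log b|]

section Perturbation

variable {b L c : ℕ → ℂ} {Mb K : ℝ}

theorem exists_summable_bound_mul_exp_sub_exp (hb : ∀ n, ‖b n‖ ≤ Mb)
    (hL : ∀ n, ‖L n‖ ≤ Real.log ((n : ℝ) + 1) + K)
    (hc : ∀ k : ℕ, Summable fun n : ℕ => ((n : ℝ) + 1) ^ k * ‖c n‖) {R : ℝ} (hR : 0 ≤ R) :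
    ∃ u : ℕ → ℝ, Summable u ∧ ∀ n, ∀ s ∈ closedBall (0 : ℂ) R,
      ‖b n * (exp (s * (L n + c n)) - exp (s * L n))‖ ≤ u n := by
  have hc0 : Summable fun n => ‖c n‖ := by simpa using hc 0
  set C := ∑' n, ‖c n‖
  have hcC : ∀ n, ‖c n‖ ≤ C := fun n => hc0.le_tsum n fun m _ => norm_nonneg _
  refine ⟨fun n => Mb * Real.exp (R * K) * (R * Real.exp (R * C)) *
    (((n : ℝ) + 1) ^ ⌈R⌉₊ * ‖c n‖), (hc ⌈R⌉₊).mul_left _, fun n s hs => ?_⟩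
  have hsR : ‖s‖ ≤ R := by simpa using hs
  have hMb : 0 ≤ Mb := (norm_nonneg _).trans (hb 0)
  have hexpL : Real.exp (‖s‖ * ‖L n‖) ≤ ((n : ℝ) + 1) ^ ⌈R⌉₊ * Real.exp (R * K) :=
    calc Real.exp (‖s‖ * ‖L n‖) ≤ Real.exp (R * (Real.log ((n : ℝ) + 1) + K)) := by
          refine Real.exp_le_exp.2 ((mul_le_mul_of_nonneg_left (hL n) (norm_nonneg s)).trans
            (mul_le_mul_of_nonneg_right hsR ((norm_nonneg _).trans (hL n))))
      _ ≤ _ := Real.exp_mul_log_add_le (le_add_of_nonneg_left n.cast_nonneg)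
  calc ‖b n * (exp (s * (L n + c n)) - exp (s * L n))‖
      ≤ Mb * (Real.exp (‖s‖ * ‖L n‖) * (‖s‖ * ‖c n‖ * Real.exp (‖s‖ * ‖c n‖))) := by
        rw [norm_mul]; gcongr; exacts [hb n, norm_exp_mul_add_sub_exp_mul_le _ _ _]
    _ ≤ Mb * ((((n : ℝ) + 1) ^ ⌈R⌉₊ * Real.exp (R * K)) *
          (R * ‖c n‖ * Real.exp (R * C))) := by
        gcongr; exact hcC n
    _ = _ := by ring

theorem summable_mul_exp_sub_exp (hb : ∀ n, ‖b n‖ ≤ Mb)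
    (hL : ∀ n, ‖L n‖ ≤ Real.log ((n : ℝ) + 1) + K)
    (hc : ∀ k : ℕ, Summable fun n : ℕ => ((n : ℝ) + 1) ^ k * ‖c n‖) (s : ℂ) :
    Summable fun n => b n * (exp (s * (L n + c n)) - exp (s * L n)) := by
  obtain ⟨u, hu, hbu⟩ := exists_summable_bound_mul_exp_sub_exp hb hL hc (norm_nonneg s)
  exact hu.of_norm_bounded fun n => hbu n s (by simp)

theorem differentiable_tsum_mul_exp_sub_exp (hb : ∀ n, ‖b n‖ ≤ Mb)
    (hL : ∀ n, ‖L n‖ ≤ Real.log ((n : ℝ) + 1) + K)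
    (hc : ∀ k : ℕ, Summable fun n : ℕ => ((n : ℝ) + 1) ^ k * ‖c n‖) :
    Differentiable ℂ fun s => ∑' n, b n * (exp (s * (L n + c n)) - exp (s * L n)) :=
  differentiable_tsum_of_summable_norm_closedBall
    (fun _ => ((differentiable_id.mul_const _).cexp.sub
      (differentiable_id.mul_const _).cexp).const_mul _)
    fun _ hR => exists_summable_bound_mul_exp_sub_exp hb hL hc hR

end Perturbation

theorem summable_mul_exp_mul_log_add_I_mul {b : ℕ → ℂ} {r θ : ℕ → ℝ} {Mb M Θ : ℝ}
    (hb : ∀ n, ‖b n‖ ≤ Mb) (hr : ∀ n, 0 < r n) (hrM : ∀ n : ℕ, ((n : ℝ) + 1) * r n ≤ M)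
    (hθ : ∀ n, |θ n| ≤ Θ) {s : ℂ} (hs : 1 < s.re) :
    Summable fun n => b n * exp (s * (Real.log (r n) + I * θ n)) := by
  have hM : 0 ≤ M := (mul_pos (by positivity) (hr 0)).le.trans (hrM 0)
  have hp : Summable fun n : ℕ => (((n : ℝ) + 1) ^ s.re)⁻¹ := by
    simpa using (summable_nat_add_iff 1).2 (Real.summable_nat_rpow_inv.2 hs)
  refine (hp.mul_left (Mb * M ^ s.re * Real.exp (|s.im| * Θ))).of_norm_bounded fun n => ?_
  have hn : (0 : ℝ) < (n : ℝ) + 1 := by positivity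
  have hre : (s * (Real.log (r n) + I * θ n)).re = s.re * Real.log (r n) - s.im * θ n := by
    simp [mul_re, mul_im]
  have hpow : Real.exp (s.re * Real.log (r n)) ≤ M ^ s.re * (((n : ℝ) + 1) ^ s.re)⁻¹ := by
    rw [mul_comm, ← Real.rpow_def_of_pos (hr n), ← Real.inv_rpow hn.le,
      ← Real.mul_rpow hM (by positivity)]
    exact Real.rpow_le_rpow (hr n).le (by rw [← div_eq_mul_inv, le_div_iff₀ hn]; linarith [hrM n])
      (by linarith)
  have him : -(s.im * θ n) ≤ |s.im| * Θ :=
    calc -(s.im * θ n) ≤ |s.im| * |θ n| := (neg_le_abs _).trans_eq (abs_mul _ _)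
      _ ≤ |s.im| * Θ := by gcongr; exact hθ n
  have hMb : 0 ≤ Mb := (norm_nonneg _).trans (hb 0)
  calc ‖b n * exp (s * (Real.log (r n) + I * θ n))‖
      = ‖b n‖ * (Real.exp (s.re * Real.log (r n)) * Real.exp (-(s.im * θ n))) := by
        rw [norm_mul, norm_exp, hre, sub_eq_add_neg, Real.exp_add]
    _ ≤ Mb * ((M ^ s.re * (((n : ℝ) + 1) ^ s.re)⁻¹) * Real.exp (|s.im| * Θ)) := by
        gcongr
        exact hb n
    _ = _ := by ring

theorem norm_div_le_mul_exp_neg {z w : ℂ} {x ε δ : ℝ} (hε : 0 < ε) (hz : ε ≤ x * ‖z‖)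
    (hw : Real.exp x * ‖w‖ ≤ δ) (hδ : δ ≤ ε) : ‖w / z‖ ≤ x * Real.exp (-x) := by
  have hz0 : 0 < ‖z‖ := (norm_nonneg z).lt_of_ne' fun h => by rw [h, mul_zero] at hz; linarith
  rw [norm_div, div_le_iff₀ hz0, Real.exp_neg, mul_right_comm, ← div_eq_mul_inv,
    le_div_iff₀ (Real.exp_pos x)]
  linarith

theorem Real.mul_exp_neg_lt_half (x : ℝ) : x * Real.exp (-x) < 1 / 2 :=
  (Real.mul_exp_neg_le_exp_neg_one x).trans_lt Real.exp_neg_one_lt_half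

theorem summable_pow_mul_norm_log_one_add {t : ℕ → ℂ}
    (ht : ∀ n : ℕ, ‖t n‖ ≤ ((n : ℝ) + 1) * Real.exp (-((n : ℝ) + 1))) (k : ℕ) :
    Summable fun n : ℕ => ((n : ℝ) + 1) ^ k * ‖log (1 + t n)‖ := by
  refine ((Real.summable_pow_mul_exp_neg_add_one (k + 1)).mul_left (3 / 2)).of_nonneg_of_le
    (fun n => by positivity) fun n => ?_
  have hhalf : ‖t n‖ ≤ 1 / 2 := (ht n).trans (Real.mul_exp_neg_lt_half _).le
  calc ((n : ℝ) + 1) ^ k * ‖log (1 + t n)‖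
      ≤ ((n : ℝ) + 1) ^ k * (3 / 2 * (((n : ℝ) + 1) * Real.exp (-((n : ℝ) + 1)))) := by
        gcongr
        exact (norm_log_one_add_half_le_self hhalf).trans (by gcongr; exact ht n)
    _ = _ := by ring

theorem ofReal_log_norm_add_add_arg {z w : ℂ} (θ : ℝ) (hz : z ≠ 0) (hwz : ‖w / z‖ < 1) :
    (Real.log ‖z + w‖ : ℂ) + I * (θ + arg (1 + w / z)) =
      (Real.log ‖z‖ + I * θ) + log (1 + w / z) := by
  have hzw : 1 + w / z ≠ 0 := fun h => by
    rw [show w / z = -1 by linear_combination h] at hwz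
    simp at hwz
  rw [show z + w = z * (1 + w / z) by field_simp, norm_mul,
    Real.log_mul (norm_ne_zero_iff.2 hz) (norm_ne_zero_iff.2 hzw), log]
  push_cast
  ring

theorem zeta_meromorphic_continuation_stable_general
    (b : ℕ → ℂ) (hb : ∃ M : ℝ, ∀ n, ‖b n‖ ≤ M)
    (z : ℕ → ℂ)
    (hε : 0 < ⨅ n : ℕ, ((n : ℝ) + 1) * ‖z n‖)
    (hbig : ∃ M : ℝ, ∀ n : ℕ, ((n : ℝ) + 1) * ‖z n‖ ≤ M)
    (θ : ℕ → ℝ) (hθ : ∃ Θ : ℝ, ∀ n, |θ n| ≤ Θ)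
    (F : ℂ → ℂ) (hF : MeromorphicOn F Set.univ)
    (hFeq : ∀ s : ℂ, 1 < s.re →
      F s = ∑' n : ℕ, b n *
        Complex.exp (s * (Real.log (‖z n‖) + Complex.I * θ n)))
    (w : ℕ → ℂ)
    (hw : ∃ δ : ℝ, δ < (⨅ n : ℕ, ((n : ℝ) + 1) * ‖z n‖) ∧
      ∀ n : ℕ, Real.exp ((n : ℝ) + 1) * ‖w n‖ ≤ δ) :
    ∃ G : ℂ → ℂ, MeromorphicOn G Set.univ ∧
      ∀ s : ℂ, 1 < s.re →
        G s = ∑' n : ℕ, b n *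
          Complex.exp (s * (Real.log (‖z n + w n‖) +
            Complex.I * (θ n + Complex.arg (1 + w n / z n)))) := by
  obtain ⟨Mb, hMb⟩ := hb
  obtain ⟨M, hM⟩ := hbig
  obtain ⟨Θ, hΘ⟩ := hθ
  obtain ⟨δ, hδε, hδ⟩ := hw
  set ε := ⨅ n : ℕ, ((n : ℝ) + 1) * ‖z n‖
  have hεle : ∀ n : ℕ, ε ≤ ((n : ℝ) + 1) * ‖z n‖ :=
    ciInf_le ⟨0, by rintro _ ⟨m, rfl⟩; positivity⟩
  have hz : ∀ n, 0 < ‖z n‖ := fun n =>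
    pos_of_mul_pos_right (hε.trans_le (hεle n)) (by positivity)
  have ht : ∀ n : ℕ, ‖w n / z n‖ ≤ ((n : ℝ) + 1) * Real.exp (-((n : ℝ) + 1)) :=
    fun n => norm_div_le_mul_exp_neg hε (hεle n) (hδ n) hδε.le
  have hL : ∀ n : ℕ, ‖(Real.log ‖z n‖ : ℂ) + I * θ n‖ ≤
      Real.log ((n : ℝ) + 1) + (max |Real.log ε| |Real.log M| + Θ) := fun n =>
    (norm_le_abs_re_add_abs_im _).trans <| by
      simpa [add_assoc] using
        add_le_add (Real.abs_log_le_log_add hε (by simp) (hεle n) (hM n)) (hΘ n)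
  have hc := summable_pow_mul_norm_log_one_add ht
  refine ⟨fun s => F s + ∑' n, b n *
    (exp (s * ((Real.log ‖z n‖ + I * θ n) + log (1 + w n / z n))) -
      exp (s * (Real.log ‖z n‖ + I * θ n))), ?_, fun s hs => ?_⟩
  · exact hF.add ((differentiable_tsum_mul_exp_sub_exp hMb hL hc).differentiableOn.analyticOnNhd
      isOpen_univ).meromorphicOn
  dsimp only
  rw [hFeq s hs, ← (summable_mul_exp_mul_log_add_I_mul hMb hz hM hΘ hs).tsum_add
    (summable_mul_exp_sub_exp hMb hL hc s)]
  refine tsum_congr fun n => ?_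
  rw [ofReal_log_norm_add_add_arg (θ n) (norm_pos_iff.1 (hz n))
    ((ht n).trans_lt ((Real.mul_exp_neg_lt_half _).trans (by norm_num)))]
  ring

/-- If `ζ(b, z, ·) = ∑ b n (z n)^s` (branch given by bounded arguments `θ`) extends
to a meromorphic function `F` on all of `ℂ`, then for every perturbation `w` with
`sup_n e^{n+1}|w n| < ε = ⨅ (n+1)|z n|`, the series `∑ b n (z n + w n)^s` (with the
continued branch of the argument) also extends to a meromorphic function on `ℂ`. -/
theorem zeta_meromorphic_continuation_stable
    (b : ℕ → ℂ) (hb : ∃ M : ℝ, ∀ n, ‖b n‖ ≤ M)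
    (z : ℕ → ℂ) (hz : ∀ n, z n ≠ 0)
    (hε : 0 < ⨅ n : ℕ, ((n : ℝ) + 1) * ‖z n‖)
    (hbig : ∃ M : ℝ, ∀ n : ℕ, ((n : ℝ) + 1) * ‖z n‖ ≤ M)
    (θ : ℕ → ℝ) (hθ : ∃ Θ : ℝ, ∀ n, |θ n| ≤ Θ)
    (harg : ∀ n : ℕ, z n = (‖z n‖ : ℂ) * Complex.exp (Complex.I * θ n))
    (F : ℂ → ℂ) (hF : MeromorphicOn F Set.univ)
    (hFeq : ∀ s : ℂ, 1 < s.re →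
      F s = ∑' n : ℕ, b n *
        Complex.exp (s * (Real.log (‖z n‖) + Complex.I * θ n)))
    (w : ℕ → ℂ)
    (hw : ∃ δ : ℝ, δ < (⨅ n : ℕ, ((n : ℝ) + 1) * ‖z n‖) ∧
      ∀ n : ℕ, Real.exp ((n : ℝ) + 1) * ‖w n‖ ≤ δ) :
    ∃ G : ℂ → ℂ, MeromorphicOn G Set.univ ∧
      ∀ s : ℂ, 1 < s.re →
        G s = ∑' n : ℕ, b n *
          Complex.exp (s * (Real.log (‖z n + w n‖) +
            Complex.I * (θ n + Complex.arg (1 + w n / z n)))) :=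
  zeta_meromorphic_continuation_stable_general b hb z hε hbig θ hθ F hF hFeq w hw
end

section
/- Let a : ℕ → ℂ be bounded and let λ : ℕ → ℂ satisfy sup_n |Im(λ n)| < ∞, ε := ⨅_n (n+1)·|exp(−λ n)| > 0 and sup_n (n+1)·|exp(−λ n)| < ∞. Suppose F : ℂ → ℂ is meromorphic on all of ℂ and F(s) = Σ'_n a n · exp(−(λ n)·s) for every s with Re s > 1. Let μ : ℕ → ℂ satisfy |Im(μ n − λ n)| < π for all n, and suppose there exists η > 0 with sup_n (n+1)·exp(η·(n+1))·|exp(−λ n) − exp(−μ n)| < ε. Then there exists G : ℂ → ℂ meromorphic on all of ℂ such that G(s) = Σ'_n a n · exp(−(μ n)·s) for every s with Re s > 1. -/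
/-! The perturbation `μ n - λ n` is itself exponentially small: `e^{λ n - μ n} = 1 - w n` with
`‖w n‖ ≤ (δ / ε) e^{-η (n+1)}` and `δ / ε < 1`, and since `|Im (μ n - λ n)| < π` the principal
logarithm recovers `λ n - μ n = log (1 - w n)`. Together with `‖λ n‖ ≤ log (n+1) + O(1)` this bounds
the terms of `∑ a n (e^{-μ n s} - e^{-λ n s})` by `O((n+1)^R e^{-η (n+1)})` on `‖s‖ ≤ R`, so that
series is entire; adding it to `F` continues `D(a, μ, s)`. -/

open Complex Real

lemma Real.summable_succ_pow_mul_exp_neg_mul (k : ℕ) {η : ℝ} (hη : 0 < η) :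
    Summable fun n : ℕ => ((n : ℝ) + 1) ^ k * rexp (-(η * ((n : ℝ) + 1))) := by
  refine ((summable_nat_add_iff 1).2 (summable_pow_mul_exp_neg_nat_mul k hη)).congr fun n => ?_
  push_cast
  ring_nf

lemma Complex.norm_cexp_sub_one_le (z : ℂ) : ‖cexp z - 1‖ ≤ ‖z‖ * rexp ‖z‖ := by
  simpa using norm_exp_sub_sum_le_norm_mul_exp z 1

lemma Complex.norm_le_of_norm_one_sub_exp_lt_one {z : ℂ} (hz : |z.im| < π)
    (h : ‖1 - cexp z‖ < 1) : ‖z‖ ≤ ‖1 - cexp z‖ / (1 - ‖1 - cexp z‖) := by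
  set x := ‖1 - cexp z‖
  have hz_log : z = Complex.log (1 + -(1 - cexp z)) := by
    rw [show 1 + -(1 - cexp z) = cexp z by ring, Complex.log_exp (abs_lt.1 hz).1 (abs_lt.1 hz).2.le]
  have hx1 : 0 < 1 - x := by linarith
  have hlog := norm_log_one_add_le (z := -(1 - cexp z)) (by rwa [norm_neg])
  rw [norm_neg, ← hz_log] at hlog
  calc ‖z‖ ≤ x ^ 2 * (1 - x)⁻¹ / 2 + x := hlog
    _ ≤ x / (1 - x) := by
        rw [le_div_iff₀ hx1]
        nlinarith [mul_inv_cancel₀ hx1.ne']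

lemma norm_mul_cexp_neg_mul_le {a lam s : ℂ} {M B : ℝ} (ha : ‖a‖ ≤ M) (hIm : |lam.im| ≤ B) :
    ‖a * cexp (-lam * s)‖ ≤ M * rexp (B * |s.im|) * ‖cexp (-lam)‖ ^ s.re := by
  rw [norm_mul, Complex.norm_exp, Complex.norm_exp, neg_re, ← Real.exp_mul]
  have hre : (-lam * s).re = -lam.re * s.re + lam.im * s.im := by simp [Complex.mul_re]; ring
  have him : rexp (lam.im * s.im) ≤ rexp (B * |s.im|) := Real.exp_le_exp.2 <|
    calc lam.im * s.im ≤ |lam.im| * |s.im| := by rw [← abs_mul]; exact le_abs_self _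
      _ ≤ B * |s.im| := by gcongr
  rw [hre, Real.exp_add, mul_comm (rexp _), ← mul_assoc]
  exact mul_le_mul_of_nonneg_right (mul_le_mul ha him (by positivity) ((norm_nonneg _).trans ha))
    (by positivity)

lemma summable_mul_cexp_neg_mul {a lam : ℕ → ℂ} {M B C : ℝ} (ha : ∀ n, ‖a n‖ ≤ M)
    (hIm : ∀ n, |(lam n).im| ≤ B) (hC : ∀ n : ℕ, ((n : ℝ) + 1) * ‖cexp (-lam n)‖ ≤ C)
    {s : ℂ} (hs : 1 < s.re) :
    Summable fun n => a n * cexp (-lam n * s) := by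
  have hC0 : 0 ≤ C := le_trans (by positivity) (hC 0)
  have hp : Summable fun n : ℕ => 1 / |(n : ℝ) + 1| ^ s.re :=
    (Real.summable_one_div_nat_add_rpow 1 s.re).2 hs
  refine Summable.of_norm_bounded (hp.mul_left (M * rexp (B * |s.im|) * C ^ s.re)) fun n => ?_
  refine (norm_mul_cexp_neg_mul_le (ha n) (hIm n)).trans ?_
  have hn : (0 : ℝ) < (n : ℝ) + 1 := by positivity
  have hexp : ‖cexp (-lam n)‖ ≤ C / ((n : ℝ) + 1) := by
    rw [le_div_iff₀ hn, mul_comm]; exact hC n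
  calc M * rexp (B * |s.im|) * ‖cexp (-lam n)‖ ^ s.re
      ≤ M * rexp (B * |s.im|) * (C / ((n : ℝ) + 1)) ^ s.re := by
        have : 0 ≤ M := (norm_nonneg _).trans (ha 0)
        gcongr
    _ = _ := by
        rw [Real.div_rpow hC0 hn.le, abs_of_pos hn]; ring

lemma norm_le_log_succ_add_of_mul_norm_cexp_neg_bounds {lam : ℕ → ℂ} {B c C : ℝ}
    (hIm : ∀ n, |(lam n).im| ≤ B) (hc : 0 < c)
    (hlow : ∀ n : ℕ, c ≤ ((n : ℝ) + 1) * ‖cexp (-lam n)‖)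
    (hhigh : ∀ n : ℕ, ((n : ℝ) + 1) * ‖cexp (-lam n)‖ ≤ C) (n : ℕ) :
    ‖lam n‖ ≤ Real.log ((n : ℝ) + 1) + (max |Real.log c| |Real.log C| + B) := by
  have hlog :
      Real.log (((n : ℝ) + 1) * ‖cexp (-lam n)‖) = Real.log ((n : ℝ) + 1) - (lam n).re := by
    rw [Real.log_mul (by positivity) (norm_ne_zero_iff.2 (Complex.exp_ne_zero _)),
      Complex.norm_exp, Real.log_exp, neg_re, sub_eq_add_neg]
  have hre : |Real.log ((n : ℝ) + 1) - (lam n).re| ≤ max |Real.log c| |Real.log C| := by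
    rw [← hlog]
    exact abs_le_max_abs_abs (Real.log_le_log hc (hlow n))
      (Real.log_le_log (hc.trans_le (hlow n)) (hhigh n))
  have hlog_nonneg : 0 ≤ Real.log ((n : ℝ) + 1) := Real.log_nonneg (by simp)
  calc ‖lam n‖ ≤ |(lam n).re| + |(lam n).im| := Complex.norm_le_abs_re_add_abs_im _
    _ ≤ _ := by
      have := abs_sub_abs_le_abs_sub (lam n).re (Real.log ((n : ℝ) + 1))
      rw [abs_sub_comm, abs_of_nonneg hlog_nonneg] at this
      linarith [hIm n]

lemma norm_sub_le_of_norm_cexp_neg_sub_le {lam μ : ℕ → ℂ} {c δ η : ℝ} (hc : 0 < c)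
    (hlow : ∀ n : ℕ, c ≤ ((n : ℝ) + 1) * ‖cexp (-lam n)‖) (hδ : δ < c) (hη : 0 ≤ η)
    (hclose : ∀ n : ℕ, ((n : ℝ) + 1) * rexp (η * ((n : ℝ) + 1)) *
      ‖cexp (-lam n) - cexp (-μ n)‖ ≤ δ)
    (hIm : ∀ n, |(μ n - lam n).im| < π) (n : ℕ) :
    ‖μ n - lam n‖ ≤ δ / (c - δ) * rexp (-(η * ((n : ℝ) + 1))) := by
  set x := ‖1 - cexp (lam n - μ n)‖
  set ρ := rexp (-(η * ((n : ℝ) + 1)))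
  have hρ1 : ρ ≤ 1 := Real.exp_le_one_iff.2 (by simp only [neg_nonpos]; positivity)
  have hx : x * c ≤ δ * ρ := by
    have hnorm : x = ‖cexp (-lam n) - cexp (-μ n)‖ / ‖cexp (-lam n)‖ := by
      rw [← norm_div, sub_div, div_self (Complex.exp_ne_zero _), ← Complex.exp_sub, neg_sub_neg]
    have hρ : rexp (η * ((n : ℝ) + 1)) * ρ = 1 := by
      rw [← Real.exp_add, add_neg_cancel, Real.exp_zero]
    calc x * c ≤ x * (((n : ℝ) + 1) * ‖cexp (-lam n)‖) := by gcongr; exact hlow n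
      _ = ((n : ℝ) + 1) * ‖cexp (-lam n) - cexp (-μ n)‖ := by rw [hnorm]; field_simp
      _ = ((n : ℝ) + 1) * rexp (η * ((n : ℝ) + 1)) * ‖cexp (-lam n) - cexp (-μ n)‖ * ρ := by
        linear_combination (-((n : ℝ) + 1) * ‖cexp (-lam n) - cexp (-μ n)‖) * hρ
      _ ≤ δ * ρ := by gcongr; exact hclose n
  have hxq : x ≤ δ / c * ρ := by
    rw [div_mul_eq_mul_div, le_div_iff₀ hc]; exact hx
  have hx0 : 0 ≤ x := norm_nonneg _
  have hq0 : 0 ≤ δ / c := by nlinarith [Real.exp_pos (-(η * ((n : ℝ) + 1)))]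
  have hq1 : δ / c < 1 := (div_lt_one hc).2 hδ
  have hxq' : x ≤ δ / c := hxq.trans (mul_le_of_le_one_right hq0 hρ1)
  rw [← norm_neg, neg_sub]
  calc ‖lam n - μ n‖ ≤ x / (1 - x) := Complex.norm_le_of_norm_one_sub_exp_lt_one (by
        rw [← abs_neg, ← Complex.neg_im, neg_sub]; exact hIm n) (hxq'.trans_lt hq1)
    _ ≤ δ / c * ρ / (1 - δ / c) := by gcongr
    _ = δ / (c - δ) * ρ := by field_simp

lemma norm_mul_cexp_sub_cexp_le {a lam μ s : ℂ} {M L K t ρ : ℝ} {k : ℕ} (ha : ‖a‖ ≤ M)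
    (ht : 0 < t) (hlam : ‖lam‖ ≤ Real.log t + L) (hμ : ‖μ - lam‖ ≤ K * ρ) (hρ0 : 0 < ρ)
    (hρ1 : ρ ≤ 1) (hs : ‖s‖ ≤ k) :
    ‖a * (cexp (-μ * s) - cexp (-lam * s))‖ ≤ M * rexp ((L + K) * k) * K * k * (t ^ k * ρ) := by
  have hK : 0 ≤ K := nonneg_of_mul_nonneg_left ((norm_nonneg _).trans hμ) hρ0
  have hfactor :
      cexp (-μ * s) - cexp (-lam * s) = cexp (-lam * s) * (cexp (-(μ - lam) * s) - 1) := by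
    rw [mul_sub, ← Complex.exp_add]; ring_nf
  have hlam_s : ‖cexp (-lam * s)‖ ≤ t ^ k * rexp (L * k) :=
    calc ‖cexp (-lam * s)‖ ≤ rexp ‖-lam * s‖ := norm_exp_le_exp_norm _
      _ ≤ rexp ((Real.log t + L) * k) := by
        rw [norm_mul, norm_neg]
        exact Real.exp_le_exp.2 (mul_le_mul hlam hs (norm_nonneg _) ((norm_nonneg _).trans hlam))
      _ = t ^ k * rexp (L * k) := by
        rw [add_mul, Real.exp_add, mul_comm (Real.log t), Real.exp_nat_mul, Real.exp_log ht]
  have hz : ‖-(μ - lam) * s‖ ≤ K * k * ρ := by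
    rw [norm_mul, norm_neg, mul_right_comm]
    exact mul_le_mul hμ hs (norm_nonneg _) (by positivity)
  have hdiff : ‖cexp (-(μ - lam) * s) - 1‖ ≤ K * k * ρ * rexp (K * k) :=
    (norm_cexp_sub_one_le _).trans <| mul_le_mul hz
      (Real.exp_le_exp.2 (hz.trans (mul_le_of_le_one_right (by positivity) hρ1)))
      (by positivity) (by positivity)
  rw [hfactor, norm_mul, norm_mul]
  calc ‖a‖ * (‖cexp (-lam * s)‖ * ‖cexp (-(μ - lam) * s) - 1‖)
      ≤ M * (t ^ k * rexp (L * k) * (K * k * ρ * rexp (K * k))) := by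
        gcongr
        · exact (norm_nonneg _).trans ha
    _ = M * rexp ((L + K) * k) * K * k * (t ^ k * ρ) := by rw [add_mul, Real.exp_add]; ring

lemma exists_summable_bound_mul_cexp_sub {a lam μ : ℕ → ℂ} {M L K η : ℝ}
    (ha : ∀ n, ‖a n‖ ≤ M) (hlam : ∀ n : ℕ, ‖lam n‖ ≤ Real.log ((n : ℝ) + 1) + L)
    (hμ : ∀ n : ℕ, ‖μ n - lam n‖ ≤ K * rexp (-(η * ((n : ℝ) + 1)))) (hη : 0 < η) (k : ℕ) :
    ∃ u : ℕ → ℝ, Summable u ∧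
      ∀ n s, ‖s‖ ≤ k → ‖a n * (cexp (-μ n * s) - cexp (-lam n * s))‖ ≤ u n :=
  ⟨_, (Real.summable_succ_pow_mul_exp_neg_mul k hη).mul_left (M * rexp ((L + K) * k) * K * k),
    fun n _ hs => norm_mul_cexp_sub_cexp_le (ha n) (by positivity) (hlam n) (hμ n)
      (Real.exp_pos _) (Real.exp_le_one_iff.2 (by simp only [neg_nonpos]; positivity)) hs⟩

lemma differentiable_tsum_mul_cexp_sub {a lam μ : ℕ → ℂ} {M L K η : ℝ}
    (ha : ∀ n, ‖a n‖ ≤ M) (hlam : ∀ n : ℕ, ‖lam n‖ ≤ Real.log ((n : ℝ) + 1) + L)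
    (hμ : ∀ n : ℕ, ‖μ n - lam n‖ ≤ K * rexp (-(η * ((n : ℝ) + 1)))) (hη : 0 < η) :
    Differentiable ℂ fun s => ∑' n, a n * (cexp (-μ n * s) - cexp (-lam n * s)) := by
  intro s₀
  obtain ⟨k, hk⟩ := exists_nat_gt ‖s₀‖
  obtain ⟨u, hu, hbound⟩ := exists_summable_bound_mul_cexp_sub ha hlam hμ hη k
  have hball := differentiableOn_tsum_of_summable_norm hu (fun n => by fun_prop)
    Metric.isOpen_ball fun n s hs => hbound n s (mem_ball_zero_iff.1 hs).le
  exact hball.differentiableAt (Metric.isOpen_ball.mem_nhds (mem_ball_zero_iff.2 hk))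

lemma summable_mul_cexp_sub {a lam μ : ℕ → ℂ} {M L K η : ℝ}
    (ha : ∀ n, ‖a n‖ ≤ M) (hlam : ∀ n : ℕ, ‖lam n‖ ≤ Real.log ((n : ℝ) + 1) + L)
    (hμ : ∀ n : ℕ, ‖μ n - lam n‖ ≤ K * rexp (-(η * ((n : ℝ) + 1)))) (hη : 0 < η) (s : ℂ) :
    Summable fun n => a n * (cexp (-μ n * s) - cexp (-lam n * s)) := by
  obtain ⟨k, hk⟩ := exists_nat_ge ‖s‖
  obtain ⟨u, hu, hbound⟩ := exists_summable_bound_mul_cexp_sub ha hlam hμ hη k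
  exact .of_norm_bounded hu fun n => hbound n s hk

/-- Stability of meromorphic continuation of general Dirichlet series
`D(a, λ, s) = ∑ a n e^{−λ_n s}`: if the series extends meromorphically to all of `ℂ`
and `μ` is an exponentially small perturbation of `λ` (in the sense that
`sup_n (n+1) e^{η(n+1)} |e^{−λ n} − e^{−μ n}| < ε = ⨅ (n+1)|e^{−λ n}|` for some
`η > 0`), then `D(a, μ, s)` also extends meromorphically to all of `ℂ`. -/
theorem dirichlet_series_meromorphic_continuation_stable
    (a : ℕ → ℂ) (ha : ∃ M : ℝ, ∀ n, ‖a n‖ ≤ M)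
    (lam : ℕ → ℂ) (hIm : ∃ M : ℝ, ∀ n, |(lam n).im| ≤ M)
    (hε : 0 < ⨅ n : ℕ, ((n : ℝ) + 1) * ‖Complex.exp (-lam n)‖)
    (hbig : ∃ M : ℝ, ∀ n : ℕ, ((n : ℝ) + 1) * ‖Complex.exp (-lam n)‖ ≤ M)
    (F : ℂ → ℂ) (hF : MeromorphicOn F Set.univ)
    (hFeq : ∀ s : ℂ, 1 < s.re → F s = ∑' n : ℕ, a n * Complex.exp (-(lam n) * s))
    (μ : ℕ → ℂ) (hμIm : ∀ n, |(μ n - lam n).im| < Real.pi)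
    (hμ : ∃ η : ℝ, 0 < η ∧
      ∃ δ : ℝ, δ < (⨅ n : ℕ, ((n : ℝ) + 1) * ‖Complex.exp (-lam n)‖) ∧
        ∀ n : ℕ, ((n : ℝ) + 1) * Real.exp (η * ((n : ℝ) + 1)) *
          ‖Complex.exp (-lam n) - Complex.exp (-μ n)‖ ≤ δ) :
    ∃ G : ℂ → ℂ, MeromorphicOn G Set.univ ∧
      ∀ s : ℂ, 1 < s.re → G s = ∑' n : ℕ, a n * Complex.exp (-(μ n) * s) := by
  obtain ⟨M, hM⟩ := ha
  obtain ⟨B, hB⟩ := hIm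
  obtain ⟨C, hC⟩ := hbig
  obtain ⟨η, hη, δ, hδ, hclose⟩ := hμ
  have hlow : ∀ n : ℕ, (⨅ m : ℕ, ((m : ℝ) + 1) * ‖cexp (-lam m)‖) ≤
      ((n : ℝ) + 1) * ‖cexp (-lam n)‖ :=
    ciInf_le ⟨0, by rintro _ ⟨m, rfl⟩; positivity⟩
  have hlam := norm_le_log_succ_add_of_mul_norm_cexp_neg_bounds hB hε hlow hC
  have hμlam := norm_sub_le_of_norm_cexp_neg_sub_le hε hlow hδ hη.le hclose hμIm
  have hentire := differentiable_tsum_mul_cexp_sub hM hlam hμlam hη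
  refine ⟨F + fun s => ∑' n, a n * (cexp (-μ n * s) - cexp (-lam n * s)),
    hF.add fun s _ => (hentire.analyticAt s).meromorphicAt, fun s hs => ?_⟩
  rw [Pi.add_apply, hFeq s hs, ← (summable_mul_cexp_neg_mul hM hB hC hs).tsum_add
    (summable_mul_cexp_sub hM hlam hμlam hη s)]
  exact tsum_congr fun n => by ring
end

section
/- Let a : ℕ → ℂ be bounded with Im(a n) ≥ 0 for all n. Let γ : ℝ → ℓ∞ be continuous on [0,1] with γ(0) = z0 and γ(1) = z1, such that for every t ∈ [0,1] and every n ∈ ℕ the complex number (n+1) + γ(t) n is not a real number ≤ 0. Suppose F0 : ℂ → ℂ is meromorphic on the half plane H₀ = {s : Re s > 0} and F0(s) = Σ'_n exp(2πi·(n+1)·a n) · ((n+1) + z0 n)^{−s} for every s with Re s > 1 (principal-branch powers). Then there exists F1 : ℂ → ℂ meromorphic on H₀ with F1(s) = Σ'_n exp(2πi·(n+1)·a n) · ((n+1) + z1 n)^{−s} for every s with Re s > 1. -/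
/-!
The two series differ by `∑ cₙ (((n+1) + z₁ n)^{-s} - ((n+1) + z₀ n)^{-s})` with `|cₙ| ≤ 1`
(because `Im aₙ ≥ 0`). By the mean value theorem for `w ↦ w^{-s}` on the half-plane
`Re w ≥ (n+1)/2`, the `n`-th term is `O(‖z₁ - z₀‖ n^{-Re s - 1})` locally uniformly in `s`, so the
difference series converges locally uniformly on `Re s > 0` and is holomorphic there.
Adding it to `F0` continues the `z₁`-series.
-/

open Complex Filter Real

open scoped ENNReal

lemma Complex.norm_cpow_le_rpow_mul_exp (z c : ℂ) :
    ‖z ^ c‖ ≤ ‖z‖ ^ c.re * Real.exp (π * |c.im|) := by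
  refine (norm_cpow_le z c).trans ?_
  rw [div_le_iff₀ (Real.exp_pos _), mul_assoc, ← Real.exp_add]
  have harg : |z.arg * c.im| ≤ π * |c.im| := by
    rw [abs_mul]
    exact mul_le_mul_of_nonneg_right (abs_arg_le_pi z) (abs_nonneg _)
  exact le_mul_of_one_le_right (Real.rpow_nonneg (norm_nonneg z) _)
    (Real.one_le_exp (by linarith [neg_abs_le (z.arg * c.im)]))

theorem Complex.norm_cpow_sub_cpow_le {r : ℝ} (hr : 0 < r) {c v w : ℂ} (hc : c.re ≤ 1)
    (hv : r ≤ v.re) (hw : r ≤ w.re) :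
    ‖w ^ c - v ^ c‖ ≤ ‖c‖ * Real.exp (π * |c.im|) * r ^ (c.re - 1) * ‖w - v‖ := by
  refine Convex.norm_image_sub_le_of_norm_hasDerivWithin_le
    (f := fun z : ℂ => z ^ c) (f' := fun z => c * z ^ (c - 1))
    (fun x hx => ?_) (fun x hx => ?_) (convex_halfSpace_re_ge r) hv hw
  · exact (hasStrictDerivAt_cpow_const (Or.inl (hr.trans_le hx))).hasDerivAt.hasDerivWithinAt
  · have hx' : r ≤ ‖x‖ := le_trans hx (re_le_norm x)
    calc ‖c * x ^ (c - 1)‖ ≤ ‖c‖ * (‖x‖ ^ (c.re - 1) * Real.exp (π * |c.im|)) := by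
          rw [norm_mul]; gcongr; simpa using norm_cpow_le_rpow_mul_exp x (c - 1)
      _ ≤ ‖c‖ * (r ^ (c.re - 1) * Real.exp (π * |c.im|)) := by
          have := Real.rpow_le_rpow_of_nonpos hr hx' (z := c.re - 1) (by linarith)
          gcongr
      _ = _ := by ring

lemma summable_natCast_add_one_div_two_rpow {p : ℝ} (hp : p < -1) :
    Summable fun n : ℕ => (((n : ℝ) + 1) / 2) ^ p := by
  have h := (summable_nat_add_iff 1).mpr (Real.summable_nat_rpow.mpr hp)
  refine (h.mul_right ((2 : ℝ) ^ p)⁻¹).congr fun n => ?_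
  rw [Real.div_rpow (by positivity) (by norm_num)]
  push_cast
  ring

lemma half_natCast_add_one_le_re_add {M : ℝ} {u : ℂ} (hu : ‖u‖ ≤ M) {n : ℕ}
    (hn : 2 * M ≤ n) : ((n : ℝ) + 1) / 2 ≤ ((n : ℂ) + 1 + u).re := by
  have := neg_le_of_abs_le ((abs_re_le_norm u).trans hu)
  simp only [add_re, natCast_re, one_re]
  linarith

theorem norm_natCast_add_one_add_cpow_neg_sub_le {u v s : ℂ} {M ε R : ℝ} {n : ℕ}
    (hu : ‖u‖ ≤ M) (hv : ‖v‖ ≤ M) (hn : 2 * M + 1 ≤ n) (hε : -1 ≤ ε) (hεs : ε ≤ s.re)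
    (hsR : ‖s‖ ≤ R) :
    ‖((n : ℂ) + 1 + u) ^ (-s) - ((n : ℂ) + 1 + v) ^ (-s)‖ ≤
      R * Real.exp (π * R) * (((n : ℝ) + 1) / 2) ^ (-ε - 1) * (2 * M) := by
  have hr : 1 ≤ ((n : ℝ) + 1) / 2 := by linarith [(norm_nonneg u).trans hu]
  have key := norm_cpow_sub_cpow_le (r := ((n : ℝ) + 1) / 2) (c := -s) (by linarith)
    (by simp only [neg_re]; linarith)
    (half_natCast_add_one_le_re_add hv (by linarith))
    (half_natCast_add_one_le_re_add hu (by linarith))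
  simp only [neg_re, neg_im, norm_neg, abs_neg, add_sub_add_left_eq_sub] at key
  have hR : 0 ≤ R := (norm_nonneg s).trans hsR
  have him : |s.im| ≤ R := (abs_im_le_norm s).trans hsR
  have hrpow : (((n : ℝ) + 1) / 2) ^ (-s.re - 1) ≤ (((n : ℝ) + 1) / 2) ^ (-ε - 1) :=
    Real.rpow_le_rpow_of_exponent_le hr (by linarith)
  have huv : ‖u - v‖ ≤ 2 * M := by linarith [norm_sub_le u v]
  refine key.trans ?_
  gcongr

theorem summable_mul_natCast_add_one_add_cpow_neg {c u : ℕ → ℂ} {K M : ℝ}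
    (hc : ∀ n, ‖c n‖ ≤ K) (hu : ∀ n, ‖u n‖ ≤ M) {s : ℂ} (hs : 1 < s.re) :
    Summable fun n => c n * ((n : ℂ) + 1 + u n) ^ (-s) := by
  refine Summable.of_norm_bounded_eventually_nat
    ((summable_natCast_add_one_div_two_rpow (p := -s.re) (by linarith)).mul_left
      (K * Real.exp (π * |s.im|))) ?_
  filter_upwards [eventually_ge_atTop ⌈2 * M⌉₊] with n hn
  have hre := half_natCast_add_one_le_re_add (hu n) (Nat.ceil_le.mp hn)
  have hbase : ‖((n : ℂ) + 1 + u n) ^ (-s)‖ ≤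
      (((n : ℝ) + 1) / 2) ^ (-s.re) * Real.exp (π * |s.im|) := by
    have h := norm_cpow_le_rpow_mul_exp ((n : ℂ) + 1 + u n) (-s)
    have hmono := Real.rpow_le_rpow_of_nonpos (by positivity) (hre.trans (re_le_norm _))
      (z := -s.re) (by linarith)
    simp only [neg_re, neg_im, abs_neg] at h
    exact h.trans (by gcongr)
  rw [norm_mul]
  calc ‖c n‖ * ‖((n : ℂ) + 1 + u n) ^ (-s)‖
      ≤ K * ((((n : ℝ) + 1) / 2) ^ (-s.re) * Real.exp (π * |s.im|)) :=
        mul_le_mul (hc n) hbase (norm_nonneg _) ((norm_nonneg _).trans (hc 0))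
    _ = _ := by ring

theorem differentiableOn_tsum_of_eventually_norm_le {F : ℕ → ℂ → ℂ} {U : Set ℂ} {u : ℕ → ℝ}
    (hu : Summable u) (hF : ∀ n, DifferentiableOn ℂ (F n) U) (hU : IsOpen U)
    (hle : ∀ᶠ n in atTop, ∀ w ∈ U, ‖F n w‖ ≤ u n) :
    DifferentiableOn ℂ (fun w => ∑' n, F n w) U :=
  (tendstoUniformlyOn_tsum_nat_eventually hu hle).tendstoLocallyUniformlyOn.differentiableOn
    (Eventually.of_forall fun _ => DifferentiableOn.fun_sum fun n _ => hF n) hU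

theorem differentiableOn_tsum_mul_cpow_neg_sub {c u v : ℕ → ℂ} {K M : ℝ}
    (hc : ∀ n, ‖c n‖ ≤ K) (hu : ∀ n, ‖u n‖ ≤ M) (hv : ∀ n, ‖v n‖ ≤ M) :
    DifferentiableOn ℂ
      (fun s => ∑' n, c n * (((n : ℂ) + 1 + u n) ^ (-s) - ((n : ℂ) + 1 + v n) ^ (-s)))
      {s : ℂ | 0 < s.re} := by
  intro s₀ (hs₀ : 0 < s₀.re)
  set ε := s₀.re / 2 with hε
  have hε0 : 0 < ε := by linarith
  set R := ‖s₀‖ + 1 with hR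
  set S : Set ℂ := {s | ε < s.re ∧ ‖s‖ < R}
  have hSopen : IsOpen S :=
    (isOpen_lt continuous_const continuous_re).inter (isOpen_lt continuous_norm continuous_const)
  have hs₀S : s₀ ∈ S := ⟨by linarith, by linarith⟩
  have hS : DifferentiableOn ℂ
      (fun s => ∑' n, c n * (((n : ℂ) + 1 + u n) ^ (-s) - ((n : ℂ) + 1 + v n) ^ (-s))) S := by
    refine differentiableOn_tsum_of_eventually_norm_le
      ((summable_natCast_add_one_div_two_rpow (p := -ε - 1) (by linarith)).mul_left
        (K * (R * Real.exp (π * R) * (2 * M)))) (fun n s hs => ?_) hSopen ?_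
    · have hs0 : -s ≠ 0 :=
        neg_ne_zero.mpr (ne_of_apply_ne re (hε0.trans hs.1).ne')
      -- a base `(n + 1) + u n` may vanish; `b ^ (-s)` is still differentiable since `-s ≠ 0`
      have hpow (b : ℂ) : DifferentiableAt ℂ (fun s : ℂ => b ^ (-s)) s :=
        differentiableAt_id.neg.const_cpow (Or.inr hs0)
      exact (((hpow _).sub (hpow _)).const_mul _).differentiableWithinAt
    · filter_upwards [eventually_ge_atTop ⌈2 * M + 1⌉₊] with n hn s hs
      rw [norm_mul]
      calc ‖c n‖ * ‖((n : ℂ) + 1 + u n) ^ (-s) - ((n : ℂ) + 1 + v n) ^ (-s)‖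
          ≤ K * (R * Real.exp (π * R) * (((n : ℝ) + 1) / 2) ^ (-ε - 1) * (2 * M)) :=
            mul_le_mul (hc n) (norm_natCast_add_one_add_cpow_neg_sub_le (hu n) (hv n)
              (Nat.ceil_le.mp hn) (by linarith) hs.1.le hs.2.le) (norm_nonneg _)
              ((norm_nonneg _).trans (hc 0))
        _ = _ := by ring
  exact (hS.differentiableAt (hSopen.mem_nhds hs₀S)).differentiableWithinAt

lemma norm_exp_two_pi_I_mul_natCast_add_one_mul_le_one (n : ℕ) {w : ℂ} (hw : 0 ≤ w.im) :
    ‖exp (2 * π * I * ((n : ℂ) + 1) * w)‖ ≤ 1 := by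
  rw [norm_exp, Real.exp_le_one_iff]
  have hre : (2 * π * I * ((n : ℂ) + 1) * w).re = -(2 * π * ((n : ℝ) + 1) * w.im) := by
    simp [mul_re, mul_im]
  rw [hre, neg_nonpos]
  positivity

theorem zeta_LL_meromorphic_continuation_H0_general
    (a : ℕ → ℂ)
    (haIm : ∀ n, 0 ≤ (a n).im)
    (z0 z1 : lp (fun _ : ℕ => ℂ) ∞)
    (F0 : ℂ → ℂ) (hF0 : MeromorphicOn F0 {s : ℂ | 0 < s.re})
    (hF0eq : ∀ s : ℂ, 1 < s.re →
      F0 s = ∑' n : ℕ,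
        Complex.exp (2 * Real.pi * Complex.I * ((n : ℂ) + 1) * a n) *
          (((n : ℂ) + 1) + z0 n) ^ (-s)) :
    ∃ F1 : ℂ → ℂ, MeromorphicOn F1 {s : ℂ | 0 < s.re} ∧
      ∀ s : ℂ, 1 < s.re →
        F1 s = ∑' n : ℕ,
          Complex.exp (2 * Real.pi * Complex.I * ((n : ℂ) + 1) * a n) *
            (((n : ℂ) + 1) + z1 n) ^ (-s) := by
  set c : ℕ → ℂ := fun n => exp (2 * π * I * ((n : ℂ) + 1) * a n)
  have hc (n : ℕ) : ‖c n‖ ≤ 1 := norm_exp_two_pi_I_mul_natCast_add_one_mul_le_one n (haIm n)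
  have hz0 (n : ℕ) : ‖z0 n‖ ≤ max ‖z0‖ ‖z1‖ :=
    (lp.norm_apply_le_norm ENNReal.top_ne_zero z0 n).trans (le_max_left _ _)
  have hz1 (n : ℕ) : ‖z1 n‖ ≤ max ‖z0‖ ‖z1‖ :=
    (lp.norm_apply_le_norm ENNReal.top_ne_zero z1 n).trans (le_max_right _ _)
  have hdiff := differentiableOn_tsum_mul_cpow_neg_sub hc hz1 hz0
  refine ⟨fun s => F0 s + ∑' n, c n * (((n : ℂ) + 1 + z1 n) ^ (-s) - ((n : ℂ) + 1 + z0 n) ^ (-s)),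
    hF0.add (hdiff.analyticOnNhd (isOpen_lt continuous_const continuous_re)).meromorphicOn,
    fun s hs => ?_⟩
  simp only [hF0eq s hs, mul_sub]
  rw [(summable_mul_natCast_add_one_add_cpow_neg hc hz1 hs).tsum_sub
    (summable_mul_natCast_add_one_add_cpow_neg hc hz0 hs)]
  ring

/-- If the Lerch–Lipschitz zeta series `ζ^{LL}(a, z0, s) = ∑ e^{2πi(n+1)a n}((n+1)+z0 n)^{−s}`
extends meromorphically to the half-plane `H₀ = {Re s > 0}`, and `z1` is joined to `z0` by a
continuous path in `ℓ∞` along which every base `(n+1) + γ(t) n` avoids the closed negative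
real axis, then `ζ^{LL}(a, z1, ·)` also extends meromorphically to `H₀`. -/
theorem zeta_LL_meromorphic_continuation_H0
    (a : ℕ → ℂ) (ha : ∃ M : ℝ, ∀ n, ‖a n‖ ≤ M)
    (haIm : ∀ n, 0 ≤ (a n).im)
    (z0 z1 : lp (fun _ : ℕ => ℂ) ∞)
    (γ : ℝ → lp (fun _ : ℕ => ℂ) ∞)
    (hγ : ContinuousOn γ (Set.Icc 0 1)) (h0 : γ 0 = z0) (h1 : γ 1 = z1)
    (hray : ∀ t ∈ Set.Icc (0:ℝ) 1, ∀ n : ℕ,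
      ¬ ∃ x : ℝ, x ≤ 0 ∧ ((n : ℂ) + 1) + γ t n = (x : ℂ))
    (F0 : ℂ → ℂ) (hF0 : MeromorphicOn F0 {s : ℂ | 0 < s.re})
    (hF0eq : ∀ s : ℂ, 1 < s.re →
      F0 s = ∑' n : ℕ,
        Complex.exp (2 * Real.pi * Complex.I * ((n : ℂ) + 1) * a n) *
          (((n : ℂ) + 1) + z0 n) ^ (-s)) :
    ∃ F1 : ℂ → ℂ, MeromorphicOn F1 {s : ℂ | 0 < s.re} ∧
      ∀ s : ℂ, 1 < s.re →
        F1 s = ∑' n : ℕ,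
          Complex.exp (2 * Real.pi * Complex.I * ((n : ℂ) + 1) * a n) *
            (((n : ℂ) + 1) + z1 n) ^ (-s) :=
  zeta_LL_meromorphic_continuation_H0_general a haIm z0 z1 F0 hF0 hF0eq
end

section
/- Fix an integer k ≥ 1, a : Fin k → ℂ with Im(a j) ≥ 0 for all j, x : Fin k → ℝ with x j ≥ 0 for all j, and s ∈ ℂ with Re s > 1. Then Γ(s) · Σ_{n=1}^∞ exp(2πi·n·a_{ι(n)}) · (n + x_{ι(n)})^{−s} = Σ_{j ∈ Fin k} exp(2πi·(j+1)·(a j)) · ∫_{0}^{∞} t^{s−1} · exp(−((j+1) + x j)·t) / (1 − exp(2πi·k·(a j) − k·t)) dt, where t^{s−1} is the power of the positive real t, Γ is the complex Gamma function, and the integrals are over (0, ∞) (note |exp(2πi k a j − k t)| = e^{−2πk·Im(a j)}·e^{−kt} < 1 for t > 0, so the integrands are well defined, and both sides converge absolutely). -/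
/-!
Expanding `Γ(s) N^{-s} = ∫_0^∞ t^{s-1} e^{-Nt} dt` term by term, the series splits into the
`k` residue classes `n = mk + j` of the index. On each class the integrands
`e^{2πi(n+1)a_j} e^{-(n+1+x_j)t}` form a geometric series in `m` with ratio `e^{2πika_j - kt}`,
of modulus `< 1` for `t > 0` because `Im a_j ≥ 0`; summing it under the integral (legitimate by
absolute convergence for `Re s > 1`) gives the `j`-th integral.
-/

open MeasureTheory Complex Set

noncomputable def lerchTerm (A : ℂ) (X : ℝ) (s : ℂ) (n : ℕ) : ℂ :=
  exp (2 * Real.pi * I * ((n : ℂ) + 1) * A) * ((((n : ℝ) + 1 + X : ℝ)) : ℂ) ^ (-s)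

lemma re_two_pi_I_mul (c : ℝ) (A : ℂ) :
    (2 * (Real.pi : ℂ) * I * c * A).re = -(2 * Real.pi * c * A.im) := by
  simp [mul_re, mul_im]

lemma norm_exp_two_pi_I_mul_le_one {c : ℝ} (hc : 0 ≤ c) {A : ℂ} (hA : 0 ≤ A.im) :
    ‖exp (2 * Real.pi * I * c * A)‖ ≤ 1 := by
  rw [norm_exp, re_two_pi_I_mul, Real.exp_le_one_iff, neg_nonpos]
  positivity

lemma norm_exp_two_pi_I_mul_sub_lt_one {k : ℕ} (hk : 0 < k) {A : ℂ} (hA : 0 ≤ A.im)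
    {t : ℝ} (ht : 0 < t) :
    ‖exp (2 * Real.pi * I * k * A - k * t)‖ < 1 := by
  have hre : (2 * Real.pi * I * k * A - k * t).re = -(2 * Real.pi * k * A.im) - k * t := by
    rw [sub_re, ← ofReal_natCast, re_two_pi_I_mul]
    simp
  rw [norm_exp, hre, Real.exp_lt_one_iff]
  have : 0 ≤ 2 * Real.pi * k * A.im := by positivity
  have : 0 < (k : ℝ) * t := by positivity
  linarith

lemma norm_lerchTerm (A : ℂ) {X : ℝ} (hX : 0 ≤ X) (s : ℂ) (n : ℕ) :
    ‖lerchTerm A X s n‖ =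
      ‖exp (2 * Real.pi * I * ((n : ℂ) + 1) * A)‖ / ((n : ℝ) + 1 + X) ^ s.re := by
  rw [lerchTerm, norm_mul, norm_cpow_eq_rpow_re_of_pos (by positivity), neg_re,
    Real.rpow_neg (by positivity), div_eq_mul_inv]

lemma summable_lerchTerm {A : ℕ → ℂ} {X : ℕ → ℝ} (hA : ∀ n, 0 ≤ (A n).im) (hX : ∀ n, 0 ≤ X n)
    {s : ℂ} (hs : 1 < s.re) :
    Summable fun n ↦ lerchTerm (A n) (X n) s n := by
  refine Summable.of_norm <| Summable.of_nonneg_of_le (fun _ ↦ norm_nonneg _) (fun n ↦ ?_)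
    ((Real.summable_one_div_nat_add_rpow 1 s.re).mpr hs)
  have hexp : ‖exp (2 * Real.pi * I * ((n : ℂ) + 1) * A n)‖ ≤ 1 := by
    exact_mod_cast norm_exp_two_pi_I_mul_le_one (c := (n : ℝ) + 1) (by positivity) (hA n)
  rw [norm_lerchTerm _ (hX n), abs_of_pos (by positivity)]
  have hXn := hX n
  have hσ : 0 ≤ s.re := by linarith
  calc _ ≤ 1 / ((n : ℝ) + 1 + X n) ^ s.re := by gcongr
    _ ≤ _ := one_div_le_one_div_of_le (by positivity)
      (Real.rpow_le_rpow (by positivity) (by linarith) hσ)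

lemma hasSum_exp_mul_rexp_mul_add {k : ℕ} (hk : 0 < k) (j : ℕ) {A : ℂ} (hA : 0 ≤ A.im) (X : ℝ)
    {t : ℝ} (ht : 0 < t) :
    HasSum (fun m : ℕ ↦ exp (2 * Real.pi * I * (((m * k + j : ℕ) : ℂ) + 1) * A) *
        Real.exp (-(((m * k + j : ℕ) : ℝ) + 1 + X) * t))
      (exp (2 * Real.pi * I * ((j : ℂ) + 1) * A) *
        (exp (-(((j : ℂ) + 1) + X) * t) / (1 - exp (2 * Real.pi * I * k * A - k * t)))) := by
  set r := exp (2 * Real.pi * I * k * A - k * t)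
  set C := exp (2 * Real.pi * I * ((j : ℂ) + 1) * A) * exp (-(((j : ℂ) + 1) + X) * t)
  have hterm : ∀ m : ℕ, exp (2 * Real.pi * I * (((m * k + j : ℕ) : ℂ) + 1) * A) *
      Real.exp (-(((m * k + j : ℕ) : ℝ) + 1 + X) * t) = C * r ^ m := fun m ↦ by
    simp only [C, r, ofReal_exp, ← exp_nat_mul, ← exp_add]
    congr 1
    push_cast
    ring
  rw [funext hterm, mul_div_assoc', div_eq_mul_inv]
  exact (hasSum_geometric_of_norm_lt_one (norm_exp_two_pi_I_mul_sub_lt_one hk hA ht)).mul_left C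

lemma hasSum_Gamma_mul_lerchTerm_mul_add {k : ℕ} (hk : 0 < k) (j : ℕ) {A : ℂ} (hA : 0 ≤ A.im)
    {X : ℝ} (hX : 0 ≤ X) {s : ℂ} (hs : 1 < s.re) :
    HasSum (fun m : ℕ ↦ Gamma s * lerchTerm A X s (m * k + j))
      (exp (2 * Real.pi * I * ((j : ℂ) + 1) * A) *
        ∫ t in Ioi (0 : ℝ), (t : ℂ) ^ (s - 1) * exp (-(((j : ℂ) + 1) + X) * t) /
          (1 - exp (2 * Real.pi * I * k * A - k * t))) := by
  have hinj : Function.Injective fun m : ℕ ↦ m * k + j := fun _ _ h ↦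
    Nat.eq_of_mul_eq_mul_right hk (Nat.add_right_cancel h)
  have h_sum := ((summable_lerchTerm (fun _ ↦ hA) (fun _ ↦ hX) hs).norm.comp_injective hinj).congr
    fun m ↦ norm_lerchTerm A hX s (m * k + j)
  have := hasSum_mellin (fun m ↦ Or.inr (by positivity)) (by linarith)
    (fun t ht ↦ hasSum_exp_mul_rexp_mul_add hk j hA X ht) h_sum
  convert this using 1
  · ext m
    rw [lerchTerm, cpow_neg, ← mul_assoc, div_eq_mul_inv]
  · rw [mellin, ← integral_const_mul]
    refine setIntegral_congr_fun measurableSet_Ioi fun t _ ↦ ?_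
    simp only [smul_eq_mul]
    ring

/-- Integral representation of the `k`-periodic Lerch–Lipschitz zeta function: for
`Re s > 1`, `Γ(s) ζ_k(a, x, s) = ∑_{j=1}^{k} e^{2πi j a_j} ∫_0^∞ t^{s−1}
e^{−(j+x_j)t}/(1 − e^{2πik a_j − kt}) dt`. -/
theorem zeta_k_gamma_integral_representation
    (k : ℕ) (hk : 0 < k)
    (a : Fin k → ℂ) (haIm : ∀ j, 0 ≤ (a j).im)
    (x : Fin k → ℝ) (hx : ∀ j, 0 ≤ x j)
    (s : ℂ) (hs : 1 < s.re) :
    Complex.Gamma s *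
        ∑' n : ℕ,
          Complex.exp (2 * Real.pi * Complex.I * ((n : ℂ) + 1) *
              a ⟨n % k, Nat.mod_lt n hk⟩) *
            ((((n : ℝ) + 1 + x ⟨n % k, Nat.mod_lt n hk⟩ : ℝ)) : ℂ) ^ (-s) =
      ∑ j : Fin k,
        Complex.exp (2 * Real.pi * Complex.I * ((j : ℂ) + 1) * a j) *
          ∫ t in Set.Ioi (0 : ℝ),
            (t : ℂ) ^ (s - 1) * Complex.exp (-(((j : ℂ) + 1) + (x j : ℂ)) * t) /
              (1 - Complex.exp (2 * Real.pi * Complex.I * (k : ℂ) * a j - (k : ℂ) * t)) := by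
  have : NeZero k := ⟨hk.ne'⟩
  let f : ℕ → ℂ := fun n ↦
    lerchTerm (a ⟨n % k, Nat.mod_lt n hk⟩) (x ⟨n % k, Nat.mod_lt n hk⟩) s n
  change Gamma s * ∑' n, f n = _
  have hf : Summable f := summable_lerchTerm (fun _ ↦ haIm _) (fun _ ↦ hx _) hs
  -- `e (j, m) = m * k + j`
  let e : Fin k × ℕ ≃ ℕ := (Equiv.prodComm _ _).trans (Nat.divModEquiv k).symm
  have hres (j : Fin k) (m : ℕ) : (⟨(m * k + j) % k, Nat.mod_lt _ hk⟩ : Fin k) = j :=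
    Fin.ext (Nat.mul_add_mod_of_lt j.isLt)
  have hfiber (j : Fin k) : (fun m ↦ Gamma s * f (e (j, m))) =
      fun m ↦ Gamma s * lerchTerm (a j) (x j) s (m * k + j) := by
    ext m
    simp only [f, e, Equiv.trans_apply, Equiv.prodComm_apply, Prod.swap_prod_mk,
      Nat.divModEquiv_symm_apply, hres]
  have htotal : HasSum (fun p ↦ Gamma s * f (e p)) (Gamma s * ∑' n, f n) :=
    (e.hasSum_iff (f := fun n ↦ Gamma s * f n)).mpr (hf.hasSum.mul_left _)
  refine (htotal.prod_fiberwise fun j ↦ ?_).unique (hasSum_fintype _)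
  rw [hfiber]
  exact hasSum_Gamma_mul_lerchTerm_mul_add hk j (haIm j) (hx j) hs
end

section
/- Uniqueness along the real slice: let z0 ∈ ℓ∞ and β > 0, and let f : ℓ∞ → ℂ be analytic on the open ball B(z0, β) ⊂ ℓ∞. If f(z) = 0 for every z ∈ B(z0, β) such that Im(z n) = Im(z0 n) for all n ∈ ℕ, then f(z) = 0 for every z ∈ B(z0, β). -/
/-!
Write `z - z0 = x + i y` with `x = ℜ (z - z0)` and `y = ℑ (z - z0)` self-adjoint in the
C⋆-algebra `ℓ∞`, i.e. real sequences. The complex line `w ↦ z0 + x + w y` meets the ball in a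
convex open set containing `0` and `i`, and its real points lie on the real slice, where `f`
vanishes. The one-variable identity theorem then gives `f z = f (z0 + x + i y) = 0`.
-/

open scoped ENNReal ComplexStarModule
open Filter Topology

theorem AnalyticOnNhd.eq_zero_on_complex_line_of_eq_zero_on_real_line
    {E F : Type*} [NormedAddCommGroup E] [NormedSpace ℂ E] [NormedAddCommGroup F]
    [NormedSpace ℂ F] {f : E → F} {U : Set E} (hf : AnalyticOnNhd ℂ f U) (hU : IsOpen U)
    (hUc : Convex ℝ U) {a v : E} (ha : a ∈ U)
    (hreal : ∀ t : ℝ, a + (t : ℂ) • v ∈ U → f (a + (t : ℂ) • v) = 0)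
    {w : ℂ} (hw : a + w • v ∈ U) : f (a + w • v) = 0 := by
  set line : ℂ → E := fun w => a + w • v
  have hline : Continuous line := by fun_prop
  set D := line ⁻¹' U
  have hD : Convex ℝ D :=
    (hUc.translate_preimage_right a).linear_preimage
      ((LinearMap.toSpanSingleton ℂ E v).restrictScalars ℝ)
  have hg : AnalyticOnNhd ℂ (f ∘ line) D :=
    hf.comp (fun _ _ => by fun_prop) fun _ hz => hz
  have h0 : (0 : ℂ) ∈ D := by simpa [D, line] using ha
  have hnear : ∀ᶠ t : ℝ in 𝓝 0, (f ∘ line) t = 0 := by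
    have hmem : ∀ᶠ t : ℝ in 𝓝 0, line t ∈ U :=
      (hline.comp Complex.continuous_ofReal).continuousAt.preimage_mem_nhds
        (hU.mem_nhds (by simpa [line] using ha))
    filter_upwards [hmem] with t ht using hreal t ht
  have hofReal : Tendsto ((↑) : ℝ → ℂ) (𝓝[≠] 0) (𝓝[≠] 0) := by
    simpa using Complex.continuous_ofReal.continuousWithinAt.tendsto_nhdsWithin
      (x := (0 : ℝ)) (t := {0}ᶜ) fun t ht => by simpa using ht
  have hfreq : ∃ᶠ z in 𝓝[≠] (0 : ℂ), (f ∘ line) z = 0 :=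
    hofReal.frequently (hnear.filter_mono nhdsWithin_le_nhds).frequently
  exact hg.eqOn_zero_of_preconnected_of_frequently_eq_zero hD.isPreconnected h0 hfreq hw

theorem lp.im_apply_eq_zero_of_isSelfAdjoint {ι : Type*} {p : ℝ≥0∞}
    {x : lp (fun _ : ι => ℂ) p} (hx : IsSelfAdjoint x) (i : ι) : (x i).im = 0 :=
  Complex.conj_eq_iff_im.mp (by simpa using congrArg (· i) hx.star_eq)

theorem analytic_eq_zero_of_vanishing_on_real_slice_general
    (z0 : lp (fun _ : ℕ => ℂ) ∞) (β : ℝ)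
    (f : lp (fun _ : ℕ => ℂ) ∞ → ℂ)
    (hf : AnalyticOnNhd ℂ f (Metric.ball z0 β))
    (hzero : ∀ z ∈ Metric.ball z0 β, (∀ n : ℕ, (z n).im = (z0 n).im) → f z = 0) :
    ∀ z ∈ Metric.ball z0 β, f z = 0 := by
  intro z hz
  set u := z - z0
  have hz' : z = z0 + ℜ u + Complex.I • ℑ u := by
    rw [add_assoc, realPart_add_I_smul_imaginaryPart, add_sub_cancel]
  have hre : z0 + (ℜ u : lp (fun _ : ℕ => ℂ) ∞) ∈ Metric.ball z0 β := by
    rw [mem_ball_iff_norm, add_sub_cancel_left]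
    exact (realPart.norm_le u).trans_lt (mem_ball_iff_norm.mp hz)
  rw [hz'] at hz ⊢
  refine hf.eq_zero_on_complex_line_of_eq_zero_on_real_line Metric.isOpen_ball
    (convex_ball z0 β) hre (fun t ht => hzero _ ht fun n => ?_) hz
  simp only [lp.coeFn_add, lp.coeFn_smul, Pi.add_apply, Pi.smul_apply, smul_eq_mul,
    Complex.add_im, Complex.im_ofReal_mul, lp.im_apply_eq_zero_of_isSelfAdjoint (ℜ u).2,
    lp.im_apply_eq_zero_of_isSelfAdjoint (ℑ u).2, mul_zero, add_zero]

/-- Uniqueness along the real slice: an analytic function on a ball in `ℓ∞` vanishing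
on the translate of the real subspace through the center vanishes identically. -/
theorem analytic_eq_zero_of_vanishing_on_real_slice
    (z0 : lp (fun _ : ℕ => ℂ) ∞) (β : ℝ) (hβ : 0 < β)
    (f : lp (fun _ : ℕ => ℂ) ∞ → ℂ)
    (hf : AnalyticOnNhd ℂ f (Metric.ball z0 β))
    (hzero : ∀ z ∈ Metric.ball z0 β, (∀ n : ℕ, (z n).im = (z0 n).im) → f z = 0) :
    ∀ z ∈ Metric.ball z0 β, f z = 0 :=
  analytic_eq_zero_of_vanishing_on_real_slice_general z0 β f hf hzero
end
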